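/- arXiv:2206.09561 — 9 statements merged into one kernel-verified Lean document; each statement's English description precedes it below -/
import Mathlib

section
/- Let α, β, γ, δ, σ > 0 and let (x, y) : [0,∞) → ℝ² be a differentiable solution of ẋ = δ − αx − βxy, ẏ = γxy − σy. If 0 ≤ x(0) ≤ δ/α and y(0) ≥ 0, then 0 ≤ x(t) ≤ δ/α and y(t) ≥ 0 for all t ≥ 0; that is, the half-strip H = {(x,y) : 0 ≤ x ≤ δ/α, y ≥ 0} is forward flow-invariant. -/
/-!
Each of `y`, `x` and `δ/α - x` satisfies, on `[0, ∞)`, a linear equation `f' = a f + b` with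
`a` continuous, `b ≥ 0` and `f 0 ≥ 0`, so it stays nonnegative: `y' = (γx - σ) y`, then
`x' = -(α + βy) x + δ`, and finally `(δ/α - x)' = -α (δ/α - x) + βxy`, where `βxy ≥ 0` by the
first two steps.
-/

open Set

/-- Integrate the extension `t ↦ a (max t 0)`, which is continuous on all of `ℝ`. -/
theorem exists_hasDerivAt_of_continuousOn_Ici {a : ℝ → ℝ} (ha : ContinuousOn a (Ici 0)) :
    ∃ A : ℝ → ℝ, ∀ t, 0 ≤ t → HasDerivAt A (a t) t := by
  have hext : Continuous fun t : ℝ => a (max t 0) :=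
    ha.comp_continuous (continuous_id.max continuous_const) fun t => le_max_right t 0
  refine ⟨fun u => ∫ s in (0 : ℝ)..u, a (max s 0), fun t ht => ?_⟩
  simpa only [max_eq_left ht] using (hext.integral_hasStrictDerivAt 0 t).hasDerivAt

/-- Integrating factor: for a primitive `A` of `a`, `f · exp (-A)` has derivative
`b · exp (-A) ≥ 0`. -/
theorem nonneg_of_hasDerivAt_eq_mul_add {f a b : ℝ → ℝ}
    (hf : ∀ t, 0 ≤ t → HasDerivAt f (a t * f t + b t) t) (ha : ContinuousOn a (Ici 0))
    (hb : ∀ t, 0 ≤ t → 0 ≤ b t) (hf₀ : 0 ≤ f 0) {t : ℝ} (ht : 0 ≤ t) : 0 ≤ f t := by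
  obtain ⟨A, hA⟩ := exists_hasDerivAt_of_continuousOn_Ici ha
  set g : ℝ → ℝ := fun s => f s * Real.exp (-A s)
  set g' : ℝ → ℝ := fun s => b s * Real.exp (-A s)
  have hg : ∀ s, 0 ≤ s → HasDerivAt g (g' s) s := fun s hs =>
    ((hf s hs).mul (hA s hs).neg.exp).congr_deriv (by simp only [g', Pi.neg_apply]; ring)
  have hg_mono : MonotoneOn g (Ici 0) := by
    refine monotoneOn_of_hasDerivWithinAt_nonneg (f' := g') (convex_Ici 0)
      (fun s hs => (hg s hs).continuousAt.continuousWithinAt) (fun s hs => ?_) fun s hs => ?_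
    all_goals rw [interior_Ici] at hs
    · exact (hg s hs.le).hasDerivWithinAt
    · exact mul_nonneg (hb s hs.le) (Real.exp_pos _).le
  have hgt : 0 ≤ g t :=
    calc 0 ≤ g 0 := mul_nonneg hf₀ (Real.exp_pos _).le
      _ ≤ g t := hg_mono self_mem_Ici ht ht
  exact nonneg_of_mul_nonneg_left hgt (Real.exp_pos _)

theorem damped_pp_halfstrip_invariant_general
    (α β γ δ σ : ℝ)
    (hα : 0 < α) (hβ : 0 < β) (hδ : 0 < δ)
    (x y : ℝ → ℝ)
    (hx : ∀ t, 0 ≤ t → HasDerivAt x (δ - α * x t - β * x t * y t) t)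
    (hy : ∀ t, 0 ≤ t → HasDerivAt y (γ * x t * y t - σ * y t) t)
    (hx0 : 0 ≤ x 0) (hx0' : x 0 ≤ δ / α) (hy0 : 0 ≤ y 0) :
    ∀ t, 0 ≤ t → (0 ≤ x t ∧ x t ≤ δ / α ∧ 0 ≤ y t) := by
  have hxc : ContinuousOn x (Ici 0) := fun t ht => (hx t ht).continuousAt.continuousWithinAt
  have hyc : ContinuousOn y (Ici 0) := fun t ht => (hy t ht).continuousAt.continuousWithinAt
  have hy_nonneg : ∀ t, 0 ≤ t → 0 ≤ y t := fun _ =>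
    nonneg_of_hasDerivAt_eq_mul_add (a := fun s => γ * x s - σ) (b := 0)
      (fun s hs => (hy s hs).congr_deriv (by simp only [Pi.zero_apply]; ring))
      ((continuousOn_const.mul hxc).sub continuousOn_const) (fun _ _ => le_rfl) hy0
  have hx_nonneg : ∀ t, 0 ≤ t → 0 ≤ x t := fun _ =>
    nonneg_of_hasDerivAt_eq_mul_add (a := fun s => -(α + β * y s)) (b := fun _ => δ)
      (fun s hs => (hx s hs).congr_deriv (by ring))
      (continuousOn_const.add (continuousOn_const.mul hyc)).neg (fun _ _ => hδ.le) hx0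
  have hx_le : ∀ t, 0 ≤ t → x t ≤ δ / α := fun t ht => sub_nonneg.1 <|
    nonneg_of_hasDerivAt_eq_mul_add (a := fun _ => -α) (b := fun s => β * x s * y s)
      (fun s hs => ((hx s hs).const_sub (δ / α)).congr_deriv (by field_simp; ring))
      continuousOn_const
      (fun s hs => mul_nonneg (mul_nonneg hβ.le (hx_nonneg s hs)) (hy_nonneg s hs))
      (sub_nonneg.2 hx0') ht
  exact fun t ht => ⟨hx_nonneg t ht, hx_le t ht, hy_nonneg t ht⟩

/-- Forward invariance of the half-strip `H = {(x,y) : 0 ≤ x ≤ δ/α, y ≥ 0}` for the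
damped predator–prey system `ẋ = δ − αx − βxy`, `ẏ = γxy − σy`. -/
theorem damped_pp_halfstrip_invariant
    (α β γ δ σ : ℝ)
    (hα : 0 < α) (hβ : 0 < β) (hγ : 0 < γ) (hδ : 0 < δ) (hσ : 0 < σ)
    (x y : ℝ → ℝ)
    (hx : ∀ t, 0 ≤ t → HasDerivAt x (δ - α * x t - β * x t * y t) t)
    (hy : ∀ t, 0 ≤ t → HasDerivAt y (γ * x t * y t - σ * y t) t)
    (hx0 : 0 ≤ x 0) (hx0' : x 0 ≤ δ / α) (hy0 : 0 ≤ y 0) :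
    ∀ t, 0 ≤ t → (0 ≤ x t ∧ x t ≤ δ / α ∧ 0 ≤ y t) :=
  damped_pp_halfstrip_invariant_general α β γ δ σ hα hβ hδ x y hx hy hx0 hx0' hy0
end

section
/- Let α, β, γ, δ, σ > 0 with γδ > ασ, set a := γδ/σ − α, and let (x, y) : [0,∞) → ℝ² be a differentiable solution of ẋ = δ − αx − βxy, ẏ = γxy − σy with x(t) > 0 and y(t) > 0 for all t ≥ 0. Then for all t ≥ 0, d/dt [V(x(t), y(t))] = −(γ²δ/(σ·x(t)))·(x(t) − σ/γ)², which is ≤ 0; in particular V is nonincreasing along the solution. -/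
/-- Along positive solutions of the damped predator–prey system with `γδ > ασ` and
`a = γδ/σ − α`, the function `V(x,y) = γx − σ log x + βy − a log y` satisfies
`d/dt V(x(t),y(t)) = −(γ²δ/(σ x(t)))(x(t) − σ/γ)² ≤ 0`; in particular `V` is
nonincreasing along the solution. -/
theorem damped_pp_lyapunov_derivative
    (α β γ δ σ a : ℝ)
    (hα : 0 < α) (hβ : 0 < β) (hγ : 0 < γ) (hδ : 0 < δ) (hσ : 0 < σ)
    (hR : γ * δ > α * σ) (hadef : a = γ * δ / σ - α)
    (x y : ℝ → ℝ)
    (hx : ∀ t, 0 ≤ t → HasDerivAt x (δ - α * x t - β * x t * y t) t)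
    (hy : ∀ t, 0 ≤ t → HasDerivAt y (γ * x t * y t - σ * y t) t)
    (hxpos : ∀ t, 0 ≤ t → 0 < x t) (hypos : ∀ t, 0 ≤ t → 0 < y t) :
    (∀ t, 0 ≤ t →
      HasDerivAt (fun s => γ * x s - σ * Real.log (x s) + β * y s - a * Real.log (y s))
        (-(γ ^ 2 * δ / (σ * x t)) * (x t - σ / γ) ^ 2) t ∧
      -(γ ^ 2 * δ / (σ * x t)) * (x t - σ / γ) ^ 2 ≤ 0) ∧
    (∀ s t, 0 ≤ s → s ≤ t →
      γ * x t - σ * Real.log (x t) + β * y t - a * Real.log (y t) ≤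
        γ * x s - σ * Real.log (x s) + β * y s - a * Real.log (y s)) := by
  have key : ∀ t, 0 ≤ t →
      HasDerivAt (fun s => γ * x s - σ * Real.log (x s) + β * y s - a * Real.log (y s))
        (-(γ ^ 2 * δ / (σ * x t)) * (x t - σ / γ) ^ 2) t ∧
      -(γ ^ 2 * δ / (σ * x t)) * (x t - σ / γ) ^ 2 ≤ 0 := by
    intro t ht
    have hxt := hxpos t ht
    have hxne : x t ≠ 0 := ne_of_gt hxt
    have hyne : y t ≠ 0 := ne_of_gt (hypos t ht)
    have h1 := ((hx t ht).const_mul γ).sub (((hx t ht).log hxne).const_mul σ)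
    have h2 := h1.add ((hy t ht).const_mul β)
    have h3 := h2.sub (((hy t ht).log hyne).const_mul a)
    have hD : γ * (δ - α * x t - β * x t * y t) -
        σ * ((δ - α * x t - β * x t * y t) / x t) +
        β * (γ * x t * y t - σ * y t) -
        a * ((γ * x t * y t - σ * y t) / y t) =
        -(γ ^ 2 * δ / (σ * x t)) * (x t - σ / γ) ^ 2 := by
      subst hadef
      field_simp
      ring
    rw [hD] at h3
    refine ⟨h3, ?_⟩
    have h4 : 0 < γ ^ 2 * δ / (σ * x t) := by positivity
    nlinarith [sq_nonneg (x t - σ / γ)]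
  refine ⟨key, ?_⟩
  intro s t hs hst
  have hanti : AntitoneOn
      (fun s => γ * x s - σ * Real.log (x s) + β * y s - a * Real.log (y s))
      (Set.Ici (0 : ℝ)) := by
    apply antitoneOn_of_deriv_nonpos (convex_Ici 0)
    · intro u hu
      exact ((key u hu).1).continuousAt.continuousWithinAt
    · intro u hu
      rw [interior_Ici] at hu
      exact ((key u hu.le).1).differentiableAt.differentiableWithinAt
    · intro u hu
      rw [interior_Ici] at hu
      rw [((key u hu.le).1).deriv]
      exact (key u hu.le).2
  exact hanti (Set.mem_Ici.2 hs) (Set.mem_Ici.2 (hs.trans hst)) hst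
end

section
/- Let α, β, γ, δ, σ > 0 with γδ > ασ and set a := γδ/σ − α. For every C ∈ ℝ, the sublevel set U_C = {(x,y) : x > 0, y > 0, V(x,y) ≤ C} is forward flow-invariant for the damped predator–prey system: any differentiable solution (x,y) : [0,∞) → ℝ² with x(t), y(t) > 0 for all t ≥ 0 and (x(0), y(0)) ∈ U_C satisfies (x(t), y(t)) ∈ U_C for all t ≥ 0. -/
/-- Forward invariance of the sublevel sets `U_C = {(x,y) : x,y > 0, V(x,y) ≤ C}` of the
Lyapunov function `V(x,y) = γx − σ log x + βy − a log y` (with `a = γδ/σ − α`) for the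
damped predator–prey system, for positive solutions. -/
theorem damped_pp_sublevel_invariant
    (α β γ δ σ a C : ℝ)
    (hα : 0 < α) (hβ : 0 < β) (hγ : 0 < γ) (hδ : 0 < δ) (hσ : 0 < σ)
    (hR : γ * δ > α * σ) (hadef : a = γ * δ / σ - α)
    (x y : ℝ → ℝ)
    (hx : ∀ t, 0 ≤ t → HasDerivAt x (δ - α * x t - β * x t * y t) t)
    (hy : ∀ t, 0 ≤ t → HasDerivAt y (γ * x t * y t - σ * y t) t)
    (hxpos : ∀ t, 0 ≤ t → 0 < x t) (hypos : ∀ t, 0 ≤ t → 0 < y t)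
    (hV0 : γ * x 0 - σ * Real.log (x 0) + β * y 0 - a * Real.log (y 0) ≤ C) :
    ∀ t, 0 ≤ t →
      γ * x t - σ * Real.log (x t) + β * y t - a * Real.log (y t) ≤ C := by
  intro t ht
  set f : ℝ → ℝ := fun t => γ * x t - σ * Real.log (x t) + β * y t - a * Real.log (y t)
    with hf
  have hderiv : ∀ s, 0 ≤ s →
      HasDerivAt f (-(δ * (γ * x s - σ)^2 / (σ * x s))) s := by
    intro s hs
    have hxs := hxpos s hs
    have hys := hypos s hs
    have h := ((((hx s hs).const_mul γ).sub (((hx s hs).log hxs.ne').const_mul σ)).add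
      ((hy s hs).const_mul β)).sub (((hy s hs).log hys.ne').const_mul a)
    have heq : γ * (δ - α * x s - β * x s * y s) -
        σ * ((δ - α * x s - β * x s * y s) / x s) + β * (γ * x s * y s - σ * y s) -
        a * ((γ * x s * y s - σ * y s) / y s) = -(δ * (γ * x s - σ)^2 / (σ * x s)) := by
      subst hadef
      field_simp
      ring
    exact heq ▸ h
  have hcont : ContinuousOn f (Set.Ici (0:ℝ)) := fun s hs =>
    ((hderiv s hs).continuousAt).continuousWithinAt
  have hanti : AntitoneOn f (Set.Ici (0:ℝ)) := by
    apply antitoneOn_of_deriv_nonpos (convex_Ici 0) hcont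
    · intro s hs
      rw [interior_Ici] at hs
      exact ((hderiv s hs.le).differentiableAt).differentiableWithinAt
    · intro s hs
      rw [interior_Ici] at hs
      rw [(hderiv s hs.le).deriv]
      have hxs := hxpos s hs.le
      have : 0 ≤ δ * (γ * x s - σ)^2 / (σ * x s) :=
        div_nonneg (mul_nonneg hδ.le (sq_nonneg _)) (mul_pos hσ hxs).le
      linarith
  have := hanti Set.self_mem_Ici (Set.mem_Ici.mpr ht) ht
  calc f t ≤ f 0 := this
    _ ≤ C := hV0
end

section
/- Suppose α, β, γ, δ, σ > 0 and γδ > ασ, and set a := γδ/σ − α. Let (x, y) : [0,∞) → ℝ² be a differentiable solution of ẋ = δ − αx − βxy, ẏ = γxy − σy with x(0) > 0 and y(0) > 0. Then (x(t), y(t)) → (σ/γ, a/β) as t → ∞. In other words, the open first quadrant is a domain of attraction of the equilibrium (σ/γ, a/β). -/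
/-!
Both populations stay positive, and the Volterra-type function
`V = γ (x - x* log x) + β (y - y* log y)` decreases along solutions with
`V' = -γ (α + β y*) (x - x*)² / x`. Hence `V` converges and the orbit is bounded, so `x'` is
bounded; a Barbalat-type argument then forces `x → x* = σ/γ`. Finally `x + (β/γ) y` satisfies
`g' = -σ g + δ + (σ - α) x`, a stable linear equation whose forcing converges, which yields
`y → y* = a/β`.
-/
open Filter Set Real Topology

theorem antitoneOn_of_hasDerivAt_nonpos {D : Set ℝ} {f f' : ℝ → ℝ} (hD : Convex ℝ D)
    (hf : ∀ t ∈ D, HasDerivAt f (f' t) t) (hf' : ∀ t ∈ interior D, f' t ≤ 0) :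
    AntitoneOn f D :=
  antitoneOn_of_hasDerivWithinAt_nonpos hD (fun t ht => (hf t ht).continuousAt.continuousWithinAt)
    (fun t ht => (hf t (interior_subset ht)).hasDerivWithinAt) hf'

theorem AntitoneOn.exists_tendsto_atTop {f : ℝ → ℝ} {a : ℝ} (hf : AntitoneOn f (Ici a))
    (hbdd : BddBelow (f '' Ici a)) : ∃ L, Tendsto f atTop (𝓝 L) := by
  have hanti : Antitone fun t => f (max t a) := fun s t hst =>
    hf (le_max_right s a) (le_max_right t a) (max_le_max_right a hst)
  have hrange : BddBelow (range fun t => f (max t a)) :=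
    hbdd.mono (range_subset_iff.2 fun t => mem_image_of_mem f (le_max_right t a))
  exact ⟨_, (tendsto_atTop_ciInf hanti hrange).congr'
    ((eventually_ge_atTop a).mono fun t ht => by rw [max_eq_left ht])⟩

theorem exists_mem_Ioc_nonpos_and_pos_on_Ico {f : ℝ → ℝ} {a b : ℝ} (hab : a ≤ b)
    (hf : ContinuousOn f (Icc a b)) (ha : 0 < f a) (hb : f b ≤ 0) :
    ∃ c ∈ Ioc a b, f c ≤ 0 ∧ ∀ s ∈ Ico a c, 0 < f s := by
  set S := Icc a b ∩ f ⁻¹' Iic 0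
  have hS : IsClosed S := hf.preimage_isClosed_of_isClosed isClosed_Icc isClosed_Iic
  have hbdd : BddBelow S := ⟨a, fun s hs => hs.1.1⟩
  obtain ⟨⟨hac, hcb⟩, hc⟩ := hS.csInf_mem ⟨b, ⟨hab, le_rfl⟩, hb⟩ hbdd
  refine ⟨sInf S, ⟨hac.lt_of_ne ?_, hcb⟩, hc, fun s hs => ?_⟩
  · rintro h
    rw [← h] at hc
    exact (not_le.2 ha) hc
  · by_contra! h
    exact (csInf_le hbdd ⟨⟨hs.1, hs.2.le.trans hcb⟩, h⟩).not_gt hs.2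

theorem pos_of_hasDerivAt_ge_mul {f f' p : ℝ → ℝ} (hf : ∀ t, 0 ≤ t → HasDerivAt f (f' t) t)
    (hp : ContinuousOn p (Ici 0)) (hfp : ∀ t, 0 ≤ t → p t * f t ≤ f' t) (hf0 : 0 < f 0)
    {t : ℝ} (ht : 0 ≤ t) : 0 < f t := by
  by_contra! hft
  obtain ⟨c, ⟨hc0, -⟩, hfc, hpos⟩ := exists_mem_Ioc_nonpos_and_pos_on_Ico ht
    (fun s hs => (hf s hs.1).continuousAt.continuousWithinAt) hf0 hft
  obtain ⟨C, hC⟩ := isCompact_Icc.exists_bound_of_continuousOn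
    (hp.mono (Icc_subset_Ici_self : Icc 0 c ⊆ Ici 0))
  -- up to the first zero of `f`, `p ≥ -C` makes `f' + C f` nonnegative
  have hmono : MonotoneOn (fun s => f s * exp (C * s)) (Icc 0 c) := by
    have hder : ∀ s ∈ Icc 0 c, HasDerivAt (fun s => f s * exp (C * s))
        ((f' s + C * f s) * exp (C * s)) s := fun s hs =>
      ((hf s hs.1).mul ((hasDerivAt_id' s).const_mul C).exp).congr_deriv (by ring)
    refine monotoneOn_of_hasDerivWithinAt_nonneg (convex_Icc 0 c)
      (fun s hs => (hder s hs).continuousAt.continuousWithinAt)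
      (fun s hs => (hder s (interior_subset hs)).hasDerivWithinAt) fun s hs => ?_
    rw [interior_Icc] at hs
    have hps := neg_le_of_abs_le ((norm_eq_abs _).symm.trans_le (hC s (Ioo_subset_Icc_self hs)))
    have hfs := hpos s ⟨hs.1.le, hs.2⟩
    have := hfp s hs.1.le
    exact mul_nonneg (by nlinarith) (exp_pos _).le
  have h := hmono (left_mem_Icc.2 hc0.le) (right_mem_Icc.2 hc0.le) hc0.le
  simp only [mul_zero, exp_zero, mul_one] at h
  nlinarith [exp_pos (C * c)]

theorem eventually_lt_of_hasDerivAt_eq_neg_mul_add {g h : ℝ → ℝ} {σ ε : ℝ} (hσ : 0 < σ)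
    (hg : ∀ t, 0 ≤ t → HasDerivAt g (-σ * g t + h t) t) (hh : Tendsto h atTop (𝓝 0))
    (hε : 0 < ε) : ∀ᶠ t in atTop, g t < ε := by
  obtain ⟨T, hT⟩ := eventually_atTop.1 ((hh.eventually (gt_mem_nhds (by positivity :
    0 < σ * ε / 2))).and (eventually_ge_atTop 0))
  set u := fun t => (g t - ε / 2) * exp (σ * t)
  have hu : AntitoneOn u (Ici T) := by
    refine antitoneOn_of_hasDerivAt_nonpos (convex_Ici T)
      (f' := fun t => (h t - σ * ε / 2) * exp (σ * t)) (fun t ht => ?_) fun t ht => ?_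
    · exact (((hg t (hT t ht).2).sub_const (ε / 2)).mul
        ((hasDerivAt_id' t).const_mul σ).exp).congr_deriv (by ring)
    · rw [interior_Ici] at ht
      exact mul_nonpos_of_nonpos_of_nonneg (by linarith [(hT t ht.le).1]) (exp_pos _).le
  have hdecay : Tendsto (fun t => u T * exp (-(σ * t))) atTop (𝓝 0) := by
    simpa using (tendsto_exp_neg_atTop_nhds_zero.comp
      (tendsto_id.const_mul_atTop hσ)).const_mul (u T)
  filter_upwards [eventually_ge_atTop T, hdecay.eventually (gt_mem_nhds (half_pos hε))]
    with t ht hsmall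
  have hgt : g t = ε / 2 + u t * exp (-(σ * t)) := by
    simp only [u, mul_assoc, ← exp_add, add_neg_cancel, exp_zero]
    ring
  calc g t = ε / 2 + u t * exp (-(σ * t)) := hgt
    _ ≤ ε / 2 + u T * exp (-(σ * t)) := by gcongr; exact hu self_mem_Ici ht ht
    _ < ε := by linarith

theorem tendsto_of_hasDerivAt_eq_neg_mul_add {g h : ℝ → ℝ} {σ l : ℝ} (hσ : 0 < σ)
    (hg : ∀ t, 0 ≤ t → HasDerivAt g (-σ * g t + h t) t) (hh : Tendsto h atTop (𝓝 l)) :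
    Tendsto g atTop (𝓝 (l / σ)) := by
  have hg₀ : ∀ t, 0 ≤ t → HasDerivAt (fun s => g s - l / σ) (-σ * (g t - l / σ) + (h t - l)) t :=
    fun t ht => ((hg t ht).sub_const _).congr_deriv (by field_simp; ring)
  have hh₀ : Tendsto (fun t => h t - l) atTop (𝓝 0) := by simpa using hh.sub_const l
  rw [Metric.tendsto_nhds]
  intro ε hε
  filter_upwards [eventually_lt_of_hasDerivAt_eq_neg_mul_add hσ hg₀ hh₀ hε,
    eventually_lt_of_hasDerivAt_eq_neg_mul_add hσ (g := fun s => -(g s - l / σ))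
      (h := fun t => l - h t) (fun t ht => (hg₀ t ht).neg.congr_deriv (by ring))
      (by simpa using hh₀.neg) hε] with t hup hlow
  rw [Real.dist_eq, abs_lt]
  constructor <;> linarith

theorem tendsto_of_hasDerivAt_of_lyapunov {f f' V V' : ℝ → ℝ} {c K : ℝ}
    (hf : ∀ t, 0 ≤ t → HasDerivAt f (f' t) t) (hf' : ∀ t, 0 ≤ t → |f' t| ≤ K)
    (hV : ∀ t, 0 ≤ t → HasDerivAt V (V' t) t) (hV' : ∀ t, 0 ≤ t → V' t ≤ 0)
    (hVbdd : BddBelow (V '' Ici 0))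
    (hgap : ∀ ε > 0, ∃ ρ > 0, ∀ t, 0 ≤ t → ε ≤ |f t - c| → V' t ≤ -ρ) :
    Tendsto f atTop (𝓝 c) := by
  obtain ⟨L, hL⟩ := (antitoneOn_of_hasDerivAt_nonpos (convex_Ici 0) hV
    fun t ht => hV' t (interior_subset ht)).exists_tendsto_atTop hVbdd
  have hK : 0 ≤ K := (abs_nonneg _).trans (hf' 0 le_rfl)
  rw [Metric.tendsto_nhds]
  intro ε hε
  by_contra hfar
  obtain ⟨ρ, hρ, hgapε⟩ := hgap (ε / 2) (half_pos hε)
  set d := ε / (2 * (K + 1))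
  have hd : 0 < d := by positivity
  have hKd : K * d ≤ ε / 2 := by
    rw [mul_div_assoc', div_le_div_iff₀ (by positivity) two_pos]
    nlinarith
  have hdrop : Tendsto (fun t => V t - V (t + d)) atTop (𝓝 0) := by
    simpa using hL.sub (hL.comp (tendsto_atTop_add_const_right _ d tendsto_id))
  obtain ⟨t, ⟨hft, ht⟩, hdropt⟩ := (((not_eventually.1 hfar).and_eventually
    (eventually_ge_atTop 0)).and_eventually
    (hdrop.eventually (gt_mem_nhds (mul_pos hρ hd)))).exists
  rw [Real.dist_eq, not_lt] at hft
  have hnear : ∀ s ∈ Icc t (t + d), ε / 2 ≤ |f s - c| := by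
    intro s hs
    have hlip := (convex_Ici 0).norm_image_sub_le_of_norm_hasDerivWithin_le
      (fun u hu => (hf u hu).hasDerivWithinAt) (fun u hu => hf' u hu) (mem_Ici.2 ht)
      (mem_Ici.2 (ht.trans hs.1))
    rw [Real.norm_eq_abs, Real.norm_eq_abs, abs_of_nonneg (sub_nonneg.2 hs.1)] at hlip
    have : K * (s - t) ≤ K * d := mul_le_mul_of_nonneg_left (by linarith [hs.2]) hK
    linarith [abs_sub_le (f t) (f s) c, abs_sub_comm (f t) (f s)]
  have hsteep : AntitoneOn (fun s => V s + ρ * s) (Icc t (t + d)) :=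
    antitoneOn_of_hasDerivAt_nonpos (convex_Icc _ _)
      (fun s hs => (hV s (ht.trans hs.1)).add ((hasDerivAt_id' s).const_mul ρ)) fun s hs => by
        have hs' := interior_subset hs
        linarith [hgapε s (ht.trans hs'.1) (hnear s hs')]
  have := hsteep (left_mem_Icc.2 (by linarith)) (right_mem_Icc.2 (by linarith)) (by linarith)
  simp only at this
  linarith

noncomputable def volterra (k u : ℝ) : ℝ := u - k * log u

theorem volterra_self_le {k u : ℝ} (hk : 0 < k) (hu : 0 < u) : volterra k k ≤ volterra k u := by
  have h := log_le_sub_one_of_pos (div_pos hu hk)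
  rw [log_div hu.ne' hk.ne'] at h
  have hk' := mul_le_mul_of_nonneg_left h hk.le
  have hku : k * (u / k) = u := mul_div_cancel₀ u hk.ne'
  unfold volterra
  nlinarith

theorem le_of_volterra_le {k u C : ℝ} (hk : 0 < k) (hu : 0 < u) (h : volterra k u ≤ C) :
    u ≤ 2 * (C + k * log (2 * k)) := by
  have h2k : 0 < 2 * k := by positivity
  have hlog := log_le_sub_one_of_pos (div_pos hu h2k)
  rw [log_div hu.ne' h2k.ne'] at hlog
  have : k * (u / (2 * k)) = u / 2 := by field_simp
  unfold volterra at h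
  nlinarith

theorem HasDerivAt.volterra {f : ℝ → ℝ} {f' t : ℝ} (hf : HasDerivAt f f' t) (hft : f t ≠ 0)
    (k : ℝ) : HasDerivAt (fun s => volterra k (f s)) (f' - k * (f' / f t)) t :=
  hf.sub ((hf.log hft).const_mul k)

namespace PredatorPrey

noncomputable def lyapunov (β γ xs ys u v : ℝ) : ℝ := γ * volterra xs u + β * volterra ys v

variable {α β γ δ σ xs ys : ℝ} {x y : ℝ → ℝ}

theorem pos_of_pos (hδ : 0 ≤ δ) (hx : ∀ t, 0 ≤ t → HasDerivAt x (δ - α * x t - β * x t * y t) t)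
    (hy : ∀ t, 0 ≤ t → HasDerivAt y (γ * x t * y t - σ * y t) t) (hx0 : 0 < x 0) (hy0 : 0 < y 0)
    {t : ℝ} (ht : 0 ≤ t) : 0 < x t ∧ 0 < y t := by
  have hxc : ContinuousOn x (Ici 0) := fun t ht => (hx t ht).continuousAt.continuousWithinAt
  have hyc : ContinuousOn y (Ici 0) := fun t ht => (hy t ht).continuousAt.continuousWithinAt
  exact ⟨pos_of_hasDerivAt_ge_mul hx (p := fun t => -α - β * y t)
      (continuousOn_const.sub (continuousOn_const.mul hyc)) (fun t _ => by linear_combination hδ)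
      hx0 ht,
    pos_of_hasDerivAt_ge_mul hy (p := fun t => γ * x t - σ)
      ((continuousOn_const.mul hxc).sub continuousOn_const) (fun t _ => le_of_eq (by ring)) hy0 ht⟩

theorem hasDerivAt_lyapunov (hx : ∀ t, 0 ≤ t → HasDerivAt x (δ - α * x t - β * x t * y t) t)
    (hy : ∀ t, 0 ≤ t → HasDerivAt y (γ * x t * y t - σ * y t) t) (hxs : γ * xs = σ)
    (hys : xs * (α + β * ys) = δ) {t : ℝ} (ht : 0 ≤ t) (hxt : 0 < x t) (hyt : 0 < y t) :
    HasDerivAt (fun s => lyapunov β γ xs ys (x s) (y s))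
      (-(γ * (α + β * ys)) * (x t - xs) ^ 2 / x t) t := by
  subst hxs hys
  refine ((((hx t ht).volterra hxt.ne' xs).const_mul γ).add
    (((hy t ht).volterra hyt.ne' ys).const_mul β)).congr_deriv ?_
  field_simp
  ring

theorem exists_bound_of_lyapunov_le (hβ : 0 < β) (hγ : 0 < γ) (hxs : 0 < xs) (hys : 0 < ys)
    (C : ℝ) : ∃ M, ∀ u v, 0 < u → 0 < v → lyapunov β γ xs ys u v ≤ C → u ≤ M ∧ v ≤ M := by
  refine ⟨max (2 * ((C - β * volterra ys ys) / γ + xs * log (2 * xs)))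
    (2 * ((C - γ * volterra xs xs) / β + ys * log (2 * ys))),
    fun u v hu hv h => ⟨le_max_of_le_left ?_, le_max_of_le_right ?_⟩⟩ <;>
    unfold lyapunov at h
  · refine le_of_volterra_le hxs hu ((le_div_iff₀' hγ).2 ?_)
    nlinarith [volterra_self_le hys hv]
  · refine le_of_volterra_le hys hv ((le_div_iff₀' hβ).2 ?_)
    nlinarith [volterra_self_le hxs hu]

theorem tendsto_prey (hβ : 0 < β) (hγ : 0 < γ) (hδ : 0 < δ) (hxs0 : 0 < xs) (hys0 : 0 < ys)
    (hxs : γ * xs = σ) (hys : xs * (α + β * ys) = δ)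
    (hx : ∀ t, 0 ≤ t → HasDerivAt x (δ - α * x t - β * x t * y t) t)
    (hy : ∀ t, 0 ≤ t → HasDerivAt y (γ * x t * y t - σ * y t) t)
    (hpos : ∀ t, 0 ≤ t → 0 < x t ∧ 0 < y t) : Tendsto x atTop (𝓝 xs) := by
  set κ := γ * (α + β * ys)
  have hκ : 0 < κ := mul_pos hγ (pos_of_mul_pos_right (hys ▸ hδ) hxs0.le)
  have hV t (ht : 0 ≤ t) := hasDerivAt_lyapunov hx hy hxs hys ht (hpos t ht).1 (hpos t ht).2
  have hV' : ∀ t, 0 ≤ t → -κ * (x t - xs) ^ 2 / x t ≤ 0 := fun t ht =>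
    div_nonpos_of_nonpos_of_nonneg (by nlinarith [sq_nonneg (x t - xs)]) (hpos t ht).1.le
  have hanti : AntitoneOn (fun t => lyapunov β γ xs ys (x t) (y t)) (Ici 0) :=
    antitoneOn_of_hasDerivAt_nonpos (convex_Ici 0) hV fun t ht => hV' t (interior_subset ht)
  obtain ⟨M, hM⟩ := exists_bound_of_lyapunov_le hβ hγ hxs0 hys0 (lyapunov β γ xs ys (x 0) (y 0))
  have hbound t (ht : 0 ≤ t) : x t ≤ M ∧ y t ≤ M :=
    hM _ _ (hpos t ht).1 (hpos t ht).2 (hanti self_mem_Ici ht ht)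
  refine tendsto_of_hasDerivAt_of_lyapunov hx (K := δ + |α| * M + β * M * M) (fun t ht => ?_)
    hV hV' ⟨lyapunov β γ xs ys xs ys, ?_⟩ fun ε hε => ?_
  · obtain ⟨hxt, hyt⟩ := hpos t ht
    obtain ⟨hxM, hyM⟩ := hbound t ht
    have hαx : |α * x t| ≤ |α| * M := by rw [abs_mul, abs_of_pos hxt]; gcongr
    have hxy : x t * y t ≤ M * M := mul_le_mul hxM hyM hyt.le (hxt.le.trans hxM)
    rw [abs_le]
    constructor <;> nlinarith [abs_le.1 hαx, mul_pos hxt hyt]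
  · rintro _ ⟨t, ht, rfl⟩
    unfold lyapunov
    nlinarith [volterra_self_le hxs0 (hpos t ht).1, volterra_self_le hys0 (hpos t ht).2]
  · have hM0 : 0 < M := (hpos 0 le_rfl).1.trans_le (hbound 0 le_rfl).1
    refine ⟨κ * ε ^ 2 / M, by positivity, fun t ht hfar => ?_⟩
    obtain ⟨hxt, -⟩ := hpos t ht
    have hsq : ε ^ 2 ≤ (x t - xs) ^ 2 := by simpa using pow_le_pow_left₀ hε.le hfar 2
    rw [neg_mul, neg_div, neg_le_neg_iff]
    calc κ * ε ^ 2 / M ≤ κ * ε ^ 2 / x t := by gcongr; exact (hbound t ht).1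
      _ ≤ κ * (x t - xs) ^ 2 / x t := by gcongr

theorem tendsto_predator (hβ : β ≠ 0) (hσ : 0 < σ) (hxs : γ * xs = σ)
    (hys : xs * (α + β * ys) = δ) (hx : ∀ t, 0 ≤ t → HasDerivAt x (δ - α * x t - β * x t * y t) t)
    (hy : ∀ t, 0 ≤ t → HasDerivAt y (γ * x t * y t - σ * y t) t)
    (hxlim : Tendsto x atTop (𝓝 xs)) : Tendsto y atTop (𝓝 ys) := by
  have hγ : γ ≠ 0 := left_ne_zero_of_mul (hxs ▸ hσ.ne')
  have hxs0 : xs ≠ 0 := right_ne_zero_of_mul (hxs ▸ hσ.ne')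
  have hg t (ht : 0 ≤ t) : HasDerivAt (fun s => x s + β / γ * y s)
      (-σ * (x t + β / γ * y t) + (δ + (σ - α) * x t)) t :=
    ((hx t ht).add ((hy t ht).const_mul (β / γ))).congr_deriv (by field_simp; ring)
  have hglim := tendsto_of_hasDerivAt_eq_neg_mul_add hσ hg
    ((hxlim.const_mul (σ - α)).const_add δ)
  convert (hglim.sub hxlim).const_mul (γ / β) using 2 with t
  · field_simp
    ring
  · subst hxs hys
    field_simp
    ring

end PredatorPrey

theorem damped_pp_global_attraction_general
    (α β γ δ σ a : ℝ)
    (hβ : 0 < β) (hγ : 0 < γ) (hδ : 0 < δ) (hσ : 0 < σ)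
    (hR : γ * δ > α * σ) (hadef : a = γ * δ / σ - α)
    (x y : ℝ → ℝ)
    (hx : ∀ t, 0 ≤ t → HasDerivAt x (δ - α * x t - β * x t * y t) t)
    (hy : ∀ t, 0 ≤ t → HasDerivAt y (γ * x t * y t - σ * y t) t)
    (hx0 : 0 < x 0) (hy0 : 0 < y 0) :
    Tendsto (fun t => (x t, y t)) atTop (nhds (σ / γ, a / β)) := by
  have hxs : γ * (σ / γ) = σ := by field_simp
  have hys : σ / γ * (α + β * (a / β)) = δ := by
    subst hadef
    field_simp
    ring
  have ha : 0 < a := by rw [hadef, sub_pos, lt_div_iff₀ hσ]; linarith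
  have hxlim := PredatorPrey.tendsto_prey hβ hγ hδ (div_pos hσ hγ) (div_pos ha hβ) hxs hys hx hy
    fun t ht => PredatorPrey.pos_of_pos hδ.le hx hy hx0 hy0 ht
  exact hxlim.prodMk_nhds (PredatorPrey.tendsto_predator hβ.ne' hσ hxs hys hx hy hxlim)

/-- Global attraction: when `γδ > ασ`, every solution of the damped predator–prey system
starting in the open first quadrant converges to the equilibrium `(σ/γ, a/β)`,
where `a = γδ/σ − α`. -/
theorem damped_pp_global_attraction
    (α β γ δ σ a : ℝ)
    (hα : 0 < α) (hβ : 0 < β) (hγ : 0 < γ) (hδ : 0 < δ) (hσ : 0 < σ)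
    (hR : γ * δ > α * σ) (hadef : a = γ * δ / σ - α)
    (x y : ℝ → ℝ)
    (hx : ∀ t, 0 ≤ t → HasDerivAt x (δ - α * x t - β * x t * y t) t)
    (hy : ∀ t, 0 ≤ t → HasDerivAt y (γ * x t * y t - σ * y t) t)
    (hx0 : 0 < x 0) (hy0 : 0 < y 0) :
    Tendsto (fun t => (x t, y t)) atTop (nhds (σ / γ, a / β)) :=
  damped_pp_global_attraction_general α β γ δ σ a hβ hγ hδ hσ hR hadef x y hx hy hx0 hy0
end

section
/- Suppose α, β, γ, δ, σ > 0 and γδ ≤ ασ. Let (x, y) : [0,∞) → ℝ² be a differentiable solution of ẋ = δ − αx − βxy, ẏ = γxy − σy with x(0) > 0 and y(0) > 0. Then (x(t), y(t)) → (δ/α, 0) as t → ∞; i.e., the open first quadrant is a domain of attraction of the predator-extinction equilibrium (δ/α, 0). -/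
/-!
Both populations stay positive and bounded, the weighted total `γ x + β y` relaxing towards
`γ δ / min α σ`. With `ξ = δ / α`, the function `V = γ (x - ξ log x) + β y` satisfies
`V̇ = -α γ (x - ξ)² / x - β (σ - γ ξ) y`, which is `≤ 0` precisely because `γ δ ≤ α σ`, so `V`
converges. As `ẋ` is bounded, a Barbalat-type argument turns `V̇ ≤ -c (x - ξ)²` into `x → ξ`.
Then `y` converges as well (it can be read off from `V`), and since `ẋ → -β ξ lim y` while `x`
converges, that limit is `0`.
-/

open Filter Set Topology

section Comparison

variable {f f' : ℝ → ℝ} {a : ℝ}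

theorem le_of_hasDerivAt_le_hasDerivAt {g g' : ℝ → ℝ} {b : ℝ}
    (hf : ∀ t ≥ a, HasDerivAt f (f' t) t) (hg : ∀ t ≥ a, HasDerivAt g (g' t) t)
    (hab : a ≤ b) (ha : f a ≤ g a) (hf'g' : ∀ t ∈ Ico a b, f' t ≤ g' t) : f b ≤ g b :=
  image_le_of_deriv_right_le_deriv_boundary (HasDerivAt.continuousOn fun t ht => hf t ht.1)
    (fun t ht => (hf t ht.1).hasDerivWithinAt) ha
    (HasDerivAt.continuousOn fun t ht => hg t ht.1)
    (fun t ht => (hg t ht.1).hasDerivWithinAt) hf'g' ⟨hab, le_rfl⟩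

theorem pos_of_mul_le_hasDerivAt {g : ℝ → ℝ} (hf : ∀ t ≥ a, HasDerivAt f (f' t) t)
    (hg : ContinuousOn g (Ici a)) (hgf : ∀ t ≥ a, g t * f t ≤ f' t) (ha : 0 < f a) :
    ∀ t ≥ a, 0 < f t := by
  intro T hT
  obtain ⟨K, hK⟩ := isCompact_Icc.exists_bound_of_continuousOn
    (hg.mono (Icc_subset_Ici_self : Icc a T ⊆ Ici a))
  -- where `|g| ≤ K`, `f` cannot cross the positive solution `b` of `b' = -(K + 1) b` from above
  set b : ℝ → ℝ := fun t => f a * Real.exp (-(K + 1) * (t - a))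
  have hb : ∀ t, HasDerivAt b (-(K + 1) * b t) t := fun t => by
    refine ((((hasDerivAt_id' t).sub_const a).const_mul (-(K + 1))).exp.const_mul
      (f a)).congr_deriv ?_
    ring
  have hbf : b T ≤ f T := by
    refine image_le_of_deriv_right_lt_deriv_boundary' (HasDerivAt.continuousOn fun t _ => hb t)
      (fun t _ => (hb t).hasDerivWithinAt) (by simp [b])
      (HasDerivAt.continuousOn fun t ht => hf t ht.1) (fun t ht => (hf t ht.1).hasDerivWithinAt)
      (fun t ht hbt => ?_) ⟨hT, le_rfl⟩
    have hbt_pos : 0 < b t := by positivity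
    have hgK : -K ≤ g t := neg_le_of_abs_le (by simpa using hK t (Ico_subset_Icc_self ht))
    calc -(K + 1) * b t < -K * f t := by rw [← hbt]; linarith
      _ ≤ g t * f t := by gcongr; rw [← hbt]; exact hbt_pos.le
      _ ≤ f' t := hgf t ht.1
  exact (show 0 < b T by positivity).trans_le hbf

theorem le_max_of_hasDerivAt_le_sub_mul {c d : ℝ} (hc : 0 < c)
    (hf : ∀ t ≥ a, HasDerivAt f (f' t) t) (hf' : ∀ t ≥ a, f' t ≤ d - c * f t) :
    ∀ t ≥ a, f t ≤ max (f a) (d / c) := by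
  intro T hT
  have hgr := le_gronwallBound_of_liminf_deriv_right_le (K := -c) (ε := d)
    (HasDerivAt.continuousOn fun t ht => hf t ht.1)
    (fun t ht _ hr => (hf t ht.1).hasDerivWithinAt.liminf_right_slope_le hr) le_rfl
    (fun t ht => by linarith [hf' t ht.1]) T ⟨hT, le_rfl⟩
  rw [gronwallBound_of_K_ne_0 (neg_ne_zero.2 hc.ne')] at hgr
  set e := Real.exp (-c * (T - a))
  have he : e ≤ 1 := Real.exp_le_one_iff.2 (by nlinarith)
  have he' : 0 < e := Real.exp_pos _
  have hM₁ := le_max_left (f a) (d / c)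
  have hM₂ := le_max_right (f a) (d / c)
  calc f T ≤ f a * e + d / -c * (e - 1) := hgr
    _ = f a * e + d / c * (1 - e) := by ring
    _ ≤ max (f a) (d / c) * e + max (f a) (d / c) * (1 - e) := by gcongr
    _ = max (f a) (d / c) := by ring

theorem exists_tendsto_atTop_of_hasDerivAt_nonpos {m : ℝ} (hf : ∀ t ≥ a, HasDerivAt f (f' t) t)
    (hf' : ∀ t ≥ a, f' t ≤ 0) (hm : ∀ t ≥ a, m ≤ f t) : ∃ l, Tendsto f atTop (𝓝 l) := by
  have hanti : AntitoneOn f (Ici a) := antitoneOn_of_hasDerivWithinAt_nonpos (convex_Ici a)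
    (HasDerivAt.continuousOn hf) (fun t ht => (hf t (interior_subset ht)).hasDerivWithinAt)
    (fun t ht => hf' t (interior_subset ht))
  have hanti' : Antitone fun t => f (max t a) := fun s t hst =>
    hanti (le_max_right s a) (le_max_right t a) (max_le_max_right a hst)
  refine ⟨_, (tendsto_atTop_ciInf hanti' ⟨m, ?_⟩).congr' ?_⟩
  · rintro _ ⟨t, rfl⟩
    exact hm _ (le_max_right t a)
  · filter_upwards [eventually_ge_atTop a] with t ht
    rw [max_eq_left ht]

theorem tendsto_zero_of_hasDerivAt_le_neg_mul_sq {V V' : ℝ → ℝ} {c K l : ℝ} (hc : 0 < c)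
    (hV : ∀ t ≥ a, HasDerivAt V (V' t) t) (hVl : Tendsto V atTop (𝓝 l))
    (hV' : ∀ t ≥ a, V' t ≤ -c * f t ^ 2) (hf : ∀ t ≥ a, HasDerivAt f (f' t) t)
    (hf' : ∀ t ≥ a, |f' t| ≤ K) : Tendsto f atTop (𝓝 0) := by
  have hK : 0 ≤ K := (abs_nonneg _).trans (hf' a le_rfl)
  rw [Metric.tendsto_nhds]
  intro ε hε
  by_contra hfreq
  simp only [not_eventually, Real.dist_eq, sub_zero, not_lt] at hfreq
  -- after a late time with `ε ≤ |f t|`, `|f| ≥ ε / 2` persists for a time `ℓ`, during which `V`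
  -- drops by `c (ε / 2) ^ 2 * ℓ`: impossible once `V t - V (t + ℓ)` is small
  set ℓ := ε / (2 * (K + 1))
  have hℓ : 0 < ℓ := by positivity
  have hKℓ : K * ℓ ≤ ε / 2 := by
    rw [mul_div_assoc', div_le_div_iff₀ (by positivity) two_pos]; nlinarith
  have hVcauchy : Tendsto (fun t => V t - V (t + ℓ)) atTop (𝓝 0) := by
    simpa using hVl.sub (hVl.comp (tendsto_atTop_add_const_right _ ℓ tendsto_id))
  have hsmall : ∀ᶠ t in atTop, V t - V (t + ℓ) < c * (ε / 2) ^ 2 * ℓ :=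
    hVcauchy.eventually (gt_mem_nhds (by positivity))
  obtain ⟨t, hεt, hVt, hat⟩ :=
    (hfreq.and_eventually (hsmall.and (eventually_ge_atTop a))).exists
  have hstay : ∀ s ∈ Icc t (t + ℓ), ε / 2 ≤ |f s| := by
    intro s hs
    have hdist := norm_image_sub_le_of_norm_deriv_le_segment'
      (fun r hr => (hf r (hat.trans hr.1)).hasDerivWithinAt)
      (fun r hr => hf' r (hat.trans hr.1)) s hs
    rw [Real.norm_eq_abs] at hdist
    have := abs_sub_abs_le_abs_sub (f t) (f s)
    rw [abs_sub_comm] at this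
    nlinarith [hs.2]
  have hdrop : V (t + ℓ) ≤ V t - c * (ε / 2) ^ 2 * (t + ℓ - t) := by
    refine le_of_hasDerivAt_le_hasDerivAt (a := t) (fun s hs => hV s (hat.trans hs))
      (fun s _ => ((hasDerivAt_id' s).sub_const t).const_mul (c * (ε / 2) ^ 2) |>.const_sub _)
      (by linarith) (by simp) (fun s hs => ?_)
    have hsq : (ε / 2) ^ 2 ≤ f s ^ 2 := by
      rw [← sq_abs (f s)]
      exact pow_le_pow_left₀ (by positivity) (hstay s (Ico_subset_Icc_self hs)) 2
    nlinarith [hV' s (hat.trans hs.1)]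
  rw [add_sub_cancel_left] at hdrop
  linarith

theorem eq_zero_of_tendsto_of_tendsto_deriv {L l : ℝ} (hf : ∀ t ≥ a, HasDerivAt f (f' t) t)
    (hfL : Tendsto f atTop (𝓝 L)) (hf'l : Tendsto f' atTop (𝓝 l)) : l = 0 := by
  wlog hl : 0 < l generalizing f f' L l
  · rcases (not_lt.1 hl).lt_or_eq with hl | hl
    · exact neg_eq_zero.1 (this (fun t ht => (hf t ht).neg) hfL.neg hf'l.neg (neg_pos.2 hl))
    · exact hl
  obtain ⟨N, hN⟩ := eventually_atTop.1 ((hf'l.eventually (lt_mem_nhds (half_lt_self hl))).and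
    (eventually_ge_atTop a))
  have hgrowth : ∀ t ≥ N, f N + l / 2 * (t - N) ≤ f t := fun t ht =>
    le_of_hasDerivAt_le_hasDerivAt (a := N)
      (fun s _ => ((hasDerivAt_id' s).sub_const N).const_mul (l / 2) |>.const_add _)
      (fun s hs => hf s ((hN N le_rfl).2.trans hs))
      ht (by simp) (fun s hs => by simpa using (hN s hs.1).1.le)
  refine (not_tendsto_nhds_of_tendsto_atTop (tendsto_atTop_mono' atTop
    (eventually_atTop.2 ⟨N, hgrowth⟩) ?_) L hfL).elim
  exact tendsto_atTop_add_const_left _ _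
    ((tendsto_atTop_add_const_right _ _ tendsto_id).const_mul_atTop (half_pos hl))

end Comparison

namespace DampedPredatorPrey

structure IsSolution (α β γ δ σ : ℝ) (x y : ℝ → ℝ) : Prop where
  hasDerivAt_x : ∀ t ≥ 0, HasDerivAt x (δ - α * x t - β * x t * y t) t
  hasDerivAt_y : ∀ t ≥ 0, HasDerivAt y (γ * x t * y t - σ * y t) t

noncomputable def lyapunov (β γ ξ X Y : ℝ) : ℝ := γ * (X - ξ * Real.log X) + β * Y

theorem lyapunov_equilibrium_le {β γ ξ X Y : ℝ} (hβ : 0 ≤ β) (hγ : 0 ≤ γ) (hξ : 0 < ξ)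
    (hX : 0 < X) (hY : 0 ≤ Y) : lyapunov β γ ξ ξ 0 ≤ lyapunov β γ ξ X Y := by
  have hlog : ξ * Real.log (X / ξ) ≤ X - ξ := by
    have := mul_le_mul_of_nonneg_left (Real.log_le_sub_one_of_pos (div_pos hX hξ)) hξ.le
    rwa [mul_sub_one, mul_div_cancel₀ _ hξ.ne'] at this
  rw [Real.log_div hX.ne' hξ.ne'] at hlog
  unfold lyapunov
  nlinarith [mul_nonneg hβ hY, mul_nonneg hγ (sub_nonneg.2 hlog)]

variable {α β γ δ σ : ℝ} {x y : ℝ → ℝ}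

theorem sub_mul_div_nonneg (hα : 0 < α) (hR : γ * δ ≤ α * σ) : 0 ≤ σ - γ * (δ / α) := by
  rw [sub_nonneg, mul_div_assoc', div_le_iff₀ hα]
  linarith

theorem IsSolution.pos (h : IsSolution α β γ δ σ x y) (hδ : 0 ≤ δ) (hx0 : 0 < x 0)
    (hy0 : 0 < y 0) : ∀ t ≥ 0, 0 < x t ∧ 0 < y t := by
  have hxc : ContinuousOn x (Ici 0) := HasDerivAt.continuousOn h.hasDerivAt_x
  have hyc : ContinuousOn y (Ici 0) := HasDerivAt.continuousOn h.hasDerivAt_y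
  refine fun t ht => ⟨?_, ?_⟩
  · refine pos_of_mul_le_hasDerivAt (g := fun s => -α - β * y s) h.hasDerivAt_x
      (continuousOn_const.sub (continuousOn_const.mul hyc)) (fun s _ => ?_) hx0 t ht
    linarith
  · refine pos_of_mul_le_hasDerivAt (g := fun s => γ * x s - σ) h.hasDerivAt_y
      ((continuousOn_const.mul hxc).sub continuousOn_const) (fun s _ => ?_) hy0 t ht
    linarith

theorem IsSolution.exists_bound (h : IsSolution α β γ δ σ x y) (hα : 0 < α) (hβ : 0 < β)
    (hγ : 0 < γ) (hσ : 0 < σ) (hpos : ∀ t ≥ 0, 0 < x t ∧ 0 < y t) :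
    ∃ C, ∀ t ≥ 0, x t ≤ C ∧ y t ≤ C := by
  set B := max (γ * x 0 + β * y 0) (γ * δ / min α σ)
  -- `d/dt (γ x + β y) = γ δ - α γ x - σ β y ≤ γ δ - min α σ * (γ x + β y)`
  have hsum : ∀ t ≥ 0, γ * x t + β * y t ≤ B :=
    le_max_of_hasDerivAt_le_sub_mul (f := fun t => γ * x t + β * y t) (lt_min hα hσ)
      (fun t ht => ((h.hasDerivAt_x t ht).const_mul γ).add ((h.hasDerivAt_y t ht).const_mul β))
      (fun t ht => by
        have hγx := mul_le_mul_of_nonneg_right (min_le_left α σ) (mul_pos hγ (hpos t ht).1).le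
        have hβy := mul_le_mul_of_nonneg_right (min_le_right α σ) (mul_pos hβ (hpos t ht).2).le
        linarith)
  refine ⟨max (B / γ) (B / β), fun t ht => ⟨?_, ?_⟩⟩
  · refine le_max_of_le_left ((le_div_iff₀ hγ).2 ?_)
    nlinarith [hsum t ht, mul_pos hβ (hpos t ht).2]
  · refine le_max_of_le_right ((le_div_iff₀ hβ).2 ?_)
    nlinarith [hsum t ht, mul_pos hγ (hpos t ht).1]

theorem IsSolution.hasDerivAt_lyapunov (h : IsSolution α β γ δ σ x y) (hα : α ≠ 0) {t : ℝ}
    (ht : 0 ≤ t) (hxt : 0 < x t) :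
    HasDerivAt (fun s => lyapunov β γ (δ / α) (x s) (y s))
      (-(α * γ * (x t - δ / α) ^ 2 / x t) - β * (σ - γ * (δ / α)) * y t) t := by
  have hx := h.hasDerivAt_x t ht
  refine (((hx.sub ((hx.log hxt.ne').const_mul (δ / α))).const_mul γ).add
    ((h.hasDerivAt_y t ht).const_mul β)).congr_deriv ?_
  field_simp
  ring

theorem IsSolution.exists_tendsto_lyapunov (h : IsSolution α β γ δ σ x y) (hα : 0 < α)
    (hβ : 0 < β) (hγ : 0 < γ) (hδ : 0 < δ) (hR : γ * δ ≤ α * σ)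
    (hpos : ∀ t ≥ 0, 0 < x t ∧ 0 < y t) :
    ∃ l, Tendsto (fun t => lyapunov β γ (δ / α) (x t) (y t)) atTop (𝓝 l) := by
  have hσγ := sub_mul_div_nonneg hα hR
  refine exists_tendsto_atTop_of_hasDerivAt_nonpos
    (fun t ht => h.hasDerivAt_lyapunov hα.ne' ht (hpos t ht).1) (fun t ht => ?_)
    (fun t ht => lyapunov_equilibrium_le hβ.le hγ.le (div_pos hδ hα) (hpos t ht).1 (hpos t ht).2.le)
  have hxt := (hpos t ht).1
  have : 0 ≤ α * γ * (x t - δ / α) ^ 2 / x t := by positivity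
  nlinarith [mul_nonneg (mul_nonneg hβ.le hσγ) (hpos t ht).2.le]

theorem IsSolution.tendsto_prey (h : IsSolution α β γ δ σ x y) (hα : 0 < α) (hβ : 0 < β)
    (hγ : 0 < γ) (hδ : 0 < δ) (hR : γ * δ ≤ α * σ) (hpos : ∀ t ≥ 0, 0 < x t ∧ 0 < y t) {C l : ℝ}
    (hC : ∀ t ≥ 0, x t ≤ C ∧ y t ≤ C)
    (hl : Tendsto (fun t => lyapunov β γ (δ / α) (x t) (y t)) atTop (𝓝 l)) :
    Tendsto x atTop (𝓝 (δ / α)) := by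
  have hC₀ : 0 < C := (hpos 0 le_rfl).1.trans_le (hC 0 le_rfl).1
  have hσγ := sub_mul_div_nonneg hα hR
  refine tendsto_sub_nhds_zero_iff.1 (tendsto_zero_of_hasDerivAt_le_neg_mul_sq
    (c := α * γ / C) (K := δ + α * C + β * C * C) (by positivity)
    (fun t ht => h.hasDerivAt_lyapunov hα.ne' ht (hpos t ht).1) hl (fun t ht => ?_)
    (fun t ht => (h.hasDerivAt_x t ht).sub_const (δ / α)) (fun t ht => ?_))
  · obtain ⟨hxt, hyt⟩ := hpos t ht
    have hdiv : α * γ * (x t - δ / α) ^ 2 / C ≤ α * γ * (x t - δ / α) ^ 2 / x t :=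
      div_le_div_of_nonneg_left (by positivity) hxt (hC t ht).1
    have hsplit : -(α * γ / C) * (x t - δ / α) ^ 2 = -(α * γ * (x t - δ / α) ^ 2 / C) := by ring
    nlinarith [mul_nonneg (mul_nonneg hβ.le hσγ) hyt.le]
  · obtain ⟨hxt, hyt⟩ := hpos t ht
    obtain ⟨hxC, hyC⟩ := hC t ht
    rw [abs_le]
    have hxy := mul_le_mul_of_nonneg_left (mul_le_mul hxC hyC hyt.le hC₀.le) hβ.le
    constructor <;> nlinarith [mul_pos (mul_pos hβ hxt) hyt]

theorem IsSolution.tendsto_predator (h : IsSolution α β γ δ σ x y) (hα : 0 < α) (hβ : 0 < β)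
    (hδ : 0 < δ) {l : ℝ} (hl : Tendsto (fun t => lyapunov β γ (δ / α) (x t) (y t)) atTop (𝓝 l))
    (hprey : Tendsto x atTop (𝓝 (δ / α))) : Tendsto y atTop (𝓝 0) := by
  set ξ := δ / α
  have hξ : 0 < ξ := div_pos hδ hα
  set η := (l - γ * (ξ - ξ * Real.log ξ)) / β
  have hη : Tendsto y atTop (𝓝 η) := by
    refine ((hl.sub ((hprey.sub ((hprey.log hξ.ne').const_mul ξ)).const_mul γ)).div_const β).congr
      fun t => ?_
    simp only [lyapunov]
    field_simp
    ring
  -- `ẋ → δ - α ξ - β ξ η = -β ξ η`, and this limit must vanish since `x` converges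
  have hderiv : Tendsto (fun t => δ - α * x t - β * x t * y t) atTop (𝓝 (δ - α * ξ - β * ξ * η)) :=
    (tendsto_const_nhds.sub (hprey.const_mul α)).sub ((hprey.const_mul β).mul hη)
  have hzero := eq_zero_of_tendsto_of_tendsto_deriv h.hasDerivAt_x hprey hderiv
  rw [show α * ξ = δ from mul_div_cancel₀ δ hα.ne', sub_self, zero_sub, neg_eq_zero,
    mul_eq_zero] at hzero
  rcases hzero with hzero | hzero
  · exact absurd hzero (mul_pos hβ hξ).ne'
  · exact hzero ▸ hη

end DampedPredatorPrey

/-- Predator extinction: when `γδ ≤ ασ`, every solution of the damped predator–prey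
system starting in the open first quadrant converges to the equilibrium `(δ/α, 0)`. -/
theorem damped_pp_predator_extinction
    (α β γ δ σ : ℝ)
    (hα : 0 < α) (hβ : 0 < β) (hγ : 0 < γ) (hδ : 0 < δ) (hσ : 0 < σ)
    (hR : γ * δ ≤ α * σ)
    (x y : ℝ → ℝ)
    (hx : ∀ t, 0 ≤ t → HasDerivAt x (δ - α * x t - β * x t * y t) t)
    (hy : ∀ t, 0 ≤ t → HasDerivAt y (γ * x t * y t - σ * y t) t)
    (hx0 : 0 < x 0) (hy0 : 0 < y 0) :
    Tendsto (fun t => (x t, y t)) atTop (nhds (δ / α, 0)) := by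
  have h : DampedPredatorPrey.IsSolution α β γ δ σ x y := ⟨hx, hy⟩
  have hpos := h.pos hδ.le hx0 hy0
  obtain ⟨C, hC⟩ := h.exists_bound hα hβ hγ hσ hpos
  obtain ⟨l, hl⟩ := h.exists_tendsto_lyapunov hα hβ hγ hδ hR hpos
  have hprey := h.tendsto_prey hα hβ hγ hδ hR hpos hC hl
  exact hprey.prodMk_nhds (h.tendsto_predator hα hβ hδ hl hprey)
end

section
/- Suppose α, β, γ, δ, σ > 0 and γδ > ασ, and set a := γδ/σ − α. Then the equilibrium (δ/α, 0) of the damped predator–prey system is not Lyapunov stable: there exists r > 0 such that for every ε > 0 there is a differentiable solution (x, y) : [0,∞) → ℝ² of ẋ = δ − αx − βxy, ẏ = γxy − σy with ‖(x(0), y(0)) − (δ/α, 0)‖ < ε and with ‖(x(t), y(t)) − (δ/α, 0)‖ ≥ r for some t ≥ 0. -/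
/-!
Near `(δ/α, 0)` the predator equation reads `ẏ = (γ x - σ) y` with `γ x - σ ≈ γ δ / α - σ > 0`,
so a solution starting at `(δ/α, y₀)` with `y₀ > 0` that stayed in a small ball around the
equilibrium would satisfy `y ≥ y₀ e^{c t}` for some `c > 0`, which is absurd.

The real work is global existence. Composing the field with the coordinatewise clamp onto a box
`[0, A] × [0, B]` makes it bounded and Lipschitz, so the truncated system has global integral
curves. Comparison arguments show that along such a curve `x ≥ 0`, `y > 0` and `γ x + β y ≤ C`;
for a large enough box the curve therefore never leaves it and solves the original system.
-/

open Set Filter Topology NNReal Real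

section General

variable {E F : Type*} [NormedAddCommGroup E] [NormedSpace ℝ E] [NormedAddCommGroup F]
  [NormedSpace ℝ F]

theorem HasDerivAt.fst {f : ℝ → E × F} {f' : E × F} {t : ℝ} (h : HasDerivAt f f' t) :
    HasDerivAt (fun s ↦ (f s).1) f'.1 t :=
  (hasFDerivAt_fst (p := f t)).comp_hasDerivAt t h

theorem HasDerivAt.snd {f : ℝ → E × F} {f' : E × F} {t : ℝ} (h : HasDerivAt f f' t) :
    HasDerivAt (fun s ↦ (f s).2) f'.2 t :=
  (hasFDerivAt_snd (p := f t)).comp_hasDerivAt t h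

end General

theorem le_of_deriv_lt_at_eq {f f' g g' : ℝ → ℝ} {a : ℝ}
    (hf : ∀ t ≥ a, HasDerivAt f (f' t) t) (hg : ∀ t ≥ a, HasDerivAt g (g' t) t)
    (ha : g a ≤ f a) (hcontact : ∀ t ≥ a, g t = f t → g' t < f' t) :
    ∀ t ≥ a, g t ≤ f t := fun _ ht ↦
  image_le_of_deriv_right_lt_deriv_boundary'
    (fun s hs ↦ (hg s hs.1).continuousAt.continuousWithinAt)
    (fun s hs ↦ (hg s hs.1).hasDerivWithinAt) ha
    (fun s hs ↦ (hf s hs.1).continuousAt.continuousWithinAt)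
    (fun s hs ↦ (hf s hs.1).hasDerivWithinAt) (fun s hs ↦ hcontact s hs.1) ⟨ht, le_rfl⟩

section GlobalExistence

variable {E : Type*} [NormedAddCommGroup E] [NormedSpace ℝ E] [CompleteSpace E]
  {v : E → E} {K : ℝ≥0} {C : ℝ}

theorem exists_forall_mem_Ioo_hasDerivAt_of_lipschitzWith (hv : LipschitzWith K v)
    (hC : ∀ x, ‖v x‖ ≤ C) (x₀ : E) (n : ℕ) :
    ∃ γ : ℝ → E, γ 0 = x₀ ∧ ∀ t ∈ Ioo (-(n : ℝ)) n, HasDerivAt γ (v (γ t)) t := by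
  have hn : (0 : ℝ) ∈ Icc (-(n : ℝ)) n := ⟨by simp, n.cast_nonneg⟩
  -- a bounded field cannot leave the ball of radius `C * n` within time `n`
  have hPL : IsPicardLindelof (fun _ ↦ v) ⟨0, hn⟩ x₀ (C.toNNReal * n) 0 C.toNNReal K :=
    IsPicardLindelof.of_time_independent (fun x _ ↦ (hC x).trans (Real.le_coe_toNNReal C))
      hv.lipschitzOnWith (by simp)
  obtain ⟨γ, hγ0, hγ⟩ := hPL.exists_eq_forall_mem_Icc_hasDerivWithinAt₀
  exact ⟨γ, hγ0, fun t ht ↦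
    (hγ t (Ioo_subset_Icc_self ht)).hasDerivAt (Icc_mem_nhds ht.1 ht.2)⟩

theorem exists_isIntegralCurve_of_lipschitzWith_of_norm_le (hv : LipschitzWith K v)
    (hC : ∀ x, ‖v x‖ ≤ C) (x₀ : E) : ∃ γ : ℝ → E, γ 0 = x₀ ∧ IsIntegralCurve γ (fun _ ↦ v) := by
  choose γ hγ0 hγ using exists_forall_mem_Ioo_hasDerivAt_of_lipschitzWith hv hC x₀
  have agree : ∀ (n m : ℕ) (t : ℝ), |t| < n → |t| < m → γ n t = γ m t := by
    intro n m t hn hm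
    set r : ℝ := min n m
    have hsub : ∀ k : ℕ, (k = n ∨ k = m) → Ioo (-r) r ⊆ Ioo (-(k : ℝ)) k := by
      rintro k (rfl | rfl) <;> apply Ioo_subset_Ioo <;> simp [r]
    have hr : 0 < r := (abs_nonneg t).trans_lt (lt_min hn hm)
    exact ODE_solution_unique_of_mem_Ioo (v := fun _ ↦ v) (s := fun _ ↦ univ)
      (fun _ _ ↦ hv.lipschitzOnWith) ⟨neg_lt_zero.2 hr, hr⟩
      (fun s hs ↦ ⟨hγ n s (hsub n (.inl rfl) hs), trivial⟩)
      (fun s hs ↦ ⟨hγ m s (hsub m (.inr rfl) hs), trivial⟩)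
      ((hγ0 n).trans (hγ0 m).symm) (abs_lt.1 (lt_min hn hm))
  refine ⟨fun t ↦ γ (⌈|t|⌉₊ + 1) t, hγ0 _, fun t ↦ ?_⟩
  set N := ⌈|t|⌉₊ + 1
  have hlt : ∀ s : ℝ, |s| < ⌈|s|⌉₊ + 1 := fun s ↦ by linarith [Nat.le_ceil |s|]
  have hnear : {s : ℝ | |s| < N} ∈ 𝓝 t :=
    (isOpen_lt continuous_abs continuous_const).mem_nhds (by exact_mod_cast hlt t)
  have heq : (fun s ↦ γ (⌈|s|⌉₊ + 1) s) =ᶠ[𝓝 t] γ N := by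
    filter_upwards [hnear] with s hs using agree _ N s (by exact_mod_cast hlt s) hs
  have hd := hγ N t (abs_lt.1 (by exact_mod_cast hlt t))
  rw [← heq.eq_of_nhds] at hd
  exact hd.congr_of_eventuallyEq heq

theorem exists_isIntegralCurve_comp_of_locallyLipschitz (hv : LocallyLipschitz v)
    {proj : E → E} (hproj : LipschitzWith K proj) {s : Set E} (hs : IsCompact s)
    (hproj_mem : ∀ x, proj x ∈ s) (x₀ : E) :
    ∃ γ : ℝ → E, γ 0 = x₀ ∧ IsIntegralCurve γ (fun _ ↦ v ∘ proj) := by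
  obtain ⟨Kv, hKv⟩ := hv.locallyLipschitzOn.exists_lipschitzOnWith_of_compact hs
  obtain ⟨C, hC⟩ := hs.exists_bound_of_continuousOn hv.continuous.continuousOn
  exact exists_isIntegralCurve_of_lipschitzWith_of_norm_le
    (lipschitzOnWith_univ.1 (hKv.comp hproj.lipschitzOnWith fun x _ ↦ hproj_mem x))
    (fun x ↦ hC _ (hproj_mem x)) x₀

end GlobalExistence

section DampedPredatorPrey

def dampedPPField (α β γ δ σ : ℝ) (p : ℝ × ℝ) : ℝ × ℝ :=
  (δ - α * p.1 - β * p.1 * p.2, γ * p.1 * p.2 - σ * p.2)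

def clampBox (A B : ℝ) (p : ℝ × ℝ) : ℝ × ℝ :=
  (max 0 (min A p.1), max 0 (min B p.2))

variable {α β γ δ σ A B : ℝ}

theorem locallyLipschitz_dampedPPField (α β γ δ σ : ℝ) :
    LocallyLipschitz (dampedPPField α β γ δ σ) :=
  ContDiff.locallyLipschitz (𝕂 := ℝ) (by unfold dampedPPField; fun_prop)

theorem lipschitzWith_clampBox : LipschitzWith 1 (clampBox A B) := by
  unfold clampBox
  simpa using ((LipschitzWith.prod_fst.const_min A).const_max 0).prodMk
    ((LipschitzWith.prod_snd.const_min B).const_max 0)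

theorem clampBox_mem (hA : 0 ≤ A) (hB : 0 ≤ B) (p : ℝ × ℝ) :
    clampBox A B p ∈ Icc 0 A ×ˢ Icc 0 B :=
  ⟨⟨le_max_left _ _, max_le hA (min_le_left _ _)⟩, ⟨le_max_left _ _, max_le hB (min_le_left _ _)⟩⟩

theorem clampBox_eq_self {p : ℝ × ℝ} (hp : p ∈ Icc 0 A ×ˢ Icc 0 B) : clampBox A B p = p := by
  obtain ⟨⟨h1, h2⟩, ⟨h3, h4⟩⟩ := hp
  simp [clampBox, h1, h2, h3, h4]

section Truncated

variable {p : ℝ → ℝ × ℝ}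

theorem fst_nonneg_of_isIntegralCurve_clampBox
    (hp : IsIntegralCurve p (fun _ ↦ dampedPPField α β γ δ σ ∘ clampBox A B))
    (hA : 0 ≤ A) (hδ : 0 < δ) (h0 : 0 ≤ (p 0).1) :
    ∀ t ≥ 0, 0 ≤ (p t).1 := by
  refine le_of_deriv_lt_at_eq (fun t _ ↦ (hp t).fst) (fun t _ ↦ hasDerivAt_const t 0) h0 ?_
  intro t _ ht
  simp [dampedPPField, clampBox, ← ht, hA, hδ]

theorem exp_mul_le_snd_of_isIntegralCurve_clampBox
    (hp : IsIntegralCurve p (fun _ ↦ dampedPPField α β γ δ σ ∘ clampBox A B))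
    (hγ : 0 ≤ γ) (hσ : 0 < σ) {y₀ : ℝ} (hy₀ : 0 < y₀) (hy₀B : y₀ ≤ B) (h0 : (p 0).2 = y₀) :
    ∀ t ≥ 0, y₀ * exp (-(2 * σ) * t) ≤ (p t).2 := by
  -- the rate `2 σ` instead of `σ` makes the comparison strict at contact points
  refine le_of_deriv_lt_at_eq (fun t _ ↦ (hp t).snd)
    (fun t _ ↦ ((hasDerivAt_id t).const_mul _).exp.const_mul y₀) (by simp [h0]) ?_
  intro t _ hcontact
  have hy : 0 < (p t).2 := hcontact ▸ by positivity
  have hyB : (p t).2 ≤ B := hcontact ▸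
    (mul_le_of_le_one_right hy₀.le (exp_le_one_iff.2 (by nlinarith))).trans hy₀B
  have hX : 0 ≤ max 0 (min A (p t).1) := le_max_left _ _
  have hY : max 0 (min B (p t).2) = (p t).2 := by rw [min_eq_right hyB, max_eq_right hy.le]
  have hB' : y₀ * (exp (-(2 * σ) * id t) * (-(2 * σ) * 1)) = -(2 * σ) * (p t).2 := by
    rw [← hcontact, id]; ring
  simp only [Function.comp_apply, dampedPPField, clampBox, hY, hB']
  nlinarith [mul_nonneg (mul_nonneg hγ hX) hy.le]

theorem weighted_sum_le_of_isIntegralCurve_clampBox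
    (hp : IsIntegralCurve p (fun _ ↦ dampedPPField α β γ δ σ ∘ clampBox A B))
    (hβ : 0 < β) (hγ : 0 < γ) {C : ℝ} (hCA : C ≤ γ * A) (hCB : C ≤ β * B)
    (hC : γ * δ < min α σ * C) (hx : ∀ t ≥ 0, 0 ≤ (p t).1) (hy : ∀ t ≥ 0, 0 ≤ (p t).2)
    (h0 : γ * (p 0).1 + β * (p 0).2 ≤ C) :
    ∀ t ≥ 0, γ * (p t).1 + β * (p t).2 ≤ C := by
  refine le_of_deriv_lt_at_eq (fun t _ ↦ hasDerivAt_const t C)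
    (fun t _ ↦ ((hp t).fst.const_mul γ).add ((hp t).snd.const_mul β)) h0 ?_
  intro t ht hcontact
  have hxt := hx t ht
  have hyt := hy t ht
  have hxA : (p t).1 ≤ A := le_of_mul_le_mul_left (by nlinarith) hγ
  have hyB : (p t).2 ≤ B := le_of_mul_le_mul_left (by nlinarith) hβ
  simp only [Function.comp_apply, clampBox_eq_self ⟨⟨hxt, hxA⟩, ⟨hyt, hyB⟩⟩, dampedPPField]
  -- the predation terms cancel: `(γ x + β y)' = γ δ - α γ x - σ β y`
  rw [← hcontact] at hC
  nlinarith [mul_le_mul_of_nonneg_right (min_le_left α σ) (mul_nonneg hγ.le hxt),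
    mul_le_mul_of_nonneg_right (min_le_right α σ) (mul_nonneg hβ.le hyt)]

end Truncated

theorem exists_hasDerivAt_dampedPPField (hα : 0 < α) (hβ : 0 < β) (hγ : 0 < γ) (hδ : 0 < δ)
    (hσ : 0 < σ) {y₀ : ℝ} (hy₀ : 0 < y₀) :
    ∃ p : ℝ → ℝ × ℝ, p 0 = (δ / α, y₀) ∧
      ∀ t ≥ 0, HasDerivAt p (dampedPPField α β γ δ σ (p t)) t := by
  -- `γ x + β y` decreases wherever it exceeds `γ δ / min α σ`
  set C := γ * (δ / α) + β * y₀ + γ * δ / min α σ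
  have hm : 0 < min α σ := lt_min hα hσ
  have hC0 : γ * (δ / α) + β * y₀ ≤ C := le_add_of_nonneg_right (by positivity)
  have hC : γ * δ < min α σ * C := by
    have : min α σ * (γ * δ / min α σ) = γ * δ := mul_div_cancel₀ _ hm.ne'
    have : 0 < min α σ * (γ * (δ / α) + β * y₀) := by positivity
    linarith [mul_add (min α σ) (γ * (δ / α) + β * y₀) (γ * δ / min α σ)]
  set A := C / γ
  set B := C / β
  have hCA : C ≤ γ * A := (mul_div_cancel₀ _ hγ.ne').ge
  have hCB : C ≤ β * B := (mul_div_cancel₀ _ hβ.ne').ge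
  have hA : 0 ≤ A := by positivity
  have hB : 0 ≤ B := by positivity
  obtain ⟨p, hp0, hp⟩ := exists_isIntegralCurve_comp_of_locallyLipschitz
    (locallyLipschitz_dampedPPField α β γ δ σ) lipschitzWith_clampBox
    (isCompact_Icc.prod isCompact_Icc) (clampBox_mem hA hB) (δ / α, y₀)
  have hy₀B : y₀ ≤ B :=
    le_of_mul_le_mul_left (by linarith [show 0 < γ * (δ / α) by positivity]) hβ
  have hx := fst_nonneg_of_isIntegralCurve_clampBox hp hA hδ (by rw [hp0]; positivity)
  have hy : ∀ t ≥ 0, 0 ≤ (p t).2 := fun t ht ↦ (by positivity : 0 ≤ y₀ * exp _).trans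
    (exp_mul_le_snd_of_isIntegralCurve_clampBox hp hγ.le hσ hy₀ hy₀B (by rw [hp0]) t ht)
  have hsum := weighted_sum_le_of_isIntegralCurve_clampBox hp hβ hγ hCA hCB hC hx hy
    (by rwa [hp0])
  refine ⟨p, hp0, fun t ht ↦ ?_⟩
  have hmem : p t ∈ Icc 0 A ×ˢ Icc 0 B :=
    ⟨⟨hx t ht, le_of_mul_le_mul_left (by nlinarith [hsum t ht, hy t ht]) hγ⟩,
      ⟨hy t ht, le_of_mul_le_mul_left (by nlinarith [hsum t ht, hx t ht]) hβ⟩⟩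
  simpa [clampBox_eq_self hmem] using hp t

theorem exists_le_norm_sub_of_hasDerivAt_dampedPPField (hγ : 0 < γ) (hgap : σ / γ < δ / α)
    {y₀ : ℝ} (hy₀ : 0 < y₀) {p : ℝ → ℝ × ℝ} (hp0 : p 0 = (δ / α, y₀))
    (hp : ∀ t ≥ 0, HasDerivAt p (dampedPPField α β γ δ σ (p t)) t) :
    ∃ t ≥ 0, (δ / α - σ / γ) / 2 ≤ ‖p t - (δ / α, 0)‖ := by
  set r := (δ / α - σ / γ) / 2
  have hr : 0 < r := by simp only [r]; linarith
  by_contra! hball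
  have hx : ∀ t ≥ 0, δ / α - r < (p t).1 := fun t ht ↦ by
    have := (norm_fst_le (p t - (δ / α, 0))).trans_lt (hball t ht)
    rw [Prod.fst_sub, Real.norm_eq_abs, abs_sub_lt_iff] at this
    linarith
  have hy : ∀ t ≥ 0, (p t).2 < r := fun t ht ↦ by
    have := (norm_snd_le (p t - (δ / α, 0))).trans_lt (hball t ht)
    rw [Prod.snd_sub, sub_zero, Real.norm_eq_abs] at this
    exact (le_abs_self _).trans_lt this
  set c := γ * r
  have hrate : ∀ t ≥ 0, c < γ * (p t).1 - σ := fun t ht ↦ by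
    have : γ * (σ / γ) = σ := mul_div_cancel₀ _ hγ.ne'
    have : 2 * r = δ / α - σ / γ := by simp only [r]; ring
    nlinarith [mul_lt_mul_of_pos_left (hx t ht) hγ]
  have hgrowth : ∀ t ≥ 0, y₀ * exp (c * t) ≤ (p t).2 := by
    refine le_of_deriv_lt_at_eq (fun t ht ↦ (hp t ht).snd)
      (fun t _ ↦ ((hasDerivAt_id t).const_mul c).exp.const_mul y₀) (by simp [hp0]) ?_
    intro t ht hcontact
    have hpos : 0 < (p t).2 := hcontact ▸ by positivity
    have : y₀ * (exp (c * id t) * (c * 1)) = c * (p t).2 := by rw [← hcontact, id]; ring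
    simp only [this, dampedPPField]
    nlinarith [hrate t ht]
  have hc : 0 < c := by positivity
  have hT : 0 ≤ r / (c * y₀) := by positivity
  have hexp := add_one_le_exp (c * (r / (c * y₀)))
  have : c * (r / (c * y₀)) * y₀ = r := by field_simp
  nlinarith [hgrowth _ hT, hy _ hT]

end DampedPredatorPrey

theorem damped_pp_extinction_equilibrium_unstable_general
    (α β γ δ σ : ℝ)
    (hα : 0 < α) (hβ : 0 < β) (hγ : 0 < γ) (hδ : 0 < δ) (hσ : 0 < σ)
    (hR : γ * δ > α * σ) :
    ∃ r > 0, ∀ ε > 0, ∃ x y : ℝ → ℝ,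
      (∀ t, 0 ≤ t → HasDerivAt x (δ - α * x t - β * x t * y t) t) ∧
      (∀ t, 0 ≤ t → HasDerivAt y (γ * x t * y t - σ * y t) t) ∧
      ‖(x 0, y 0) - ((δ / α : ℝ), (0 : ℝ))‖ < ε ∧
      ∃ t, 0 ≤ t ∧ r ≤ ‖(x t, y t) - ((δ / α : ℝ), (0 : ℝ))‖ := by
  have hgap : σ / γ < δ / α := by rw [div_lt_div_iff₀ hγ hα]; linarith
  refine ⟨(δ / α - σ / γ) / 2, by linarith, fun ε hε ↦ ?_⟩
  obtain ⟨p, hp0, hp⟩ := exists_hasDerivAt_dampedPPField hα hβ hγ hδ hσ (half_pos hε)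
  refine ⟨fun t ↦ (p t).1, fun t ↦ (p t).2, fun t ht ↦ (hp t ht).fst, fun t ht ↦ (hp t ht).snd,
    ?_, exists_le_norm_sub_of_hasDerivAt_dampedPPField hγ hgap (half_pos hε) hp0 hp⟩
  simpa [hp0, abs_of_pos hε] using half_lt_self hε

/-- Instability of the equilibrium `(δ/α, 0)` when `γδ > ασ`: there is an `r > 0` such
that arbitrarily close to `(δ/α, 0)` there start solutions of the damped predator–prey
system that leave the ball of radius `r` around `(δ/α, 0)` at some time `t ≥ 0`. -/
theorem damped_pp_extinction_equilibrium_unstable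
    (α β γ δ σ a : ℝ)
    (hα : 0 < α) (hβ : 0 < β) (hγ : 0 < γ) (hδ : 0 < δ) (hσ : 0 < σ)
    (hR : γ * δ > α * σ) (hadef : a = γ * δ / σ - α) :
    ∃ r > 0, ∀ ε > 0, ∃ x y : ℝ → ℝ,
      (∀ t, 0 ≤ t → HasDerivAt x (δ - α * x t - β * x t * y t) t) ∧
      (∀ t, 0 ≤ t → HasDerivAt y (γ * x t * y t - σ * y t) t) ∧
      ‖(x 0, y 0) - ((δ / α : ℝ), (0 : ℝ))‖ < ε ∧
      ∃ t, 0 ≤ t ∧ r ≤ ‖(x t, y t) - ((δ / α : ℝ), (0 : ℝ))‖ :=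
  damped_pp_extinction_equilibrium_unstable_general α β γ δ σ hα hβ hγ hδ hσ hR
end

section
/- Suppose α, β, γ, δ, σ > 0 and γδ > ασ; set a := γδ/σ − α and C := V(δ/α, a/β), and let ȳ be the unique solution y > a/β of V(σ/γ, y) = C. Let (x, y) : [0,∞) → ℝ² be a differentiable solution of ẋ = δ − αx − βxy, ẏ = γxy − σy with x(0) > 0, y(0) > 0 and V(x(0), y(0)) ≤ C. Then y(t) ≤ ȳ for all t ≥ 0. -/
/-!
Both populations stay positive: each coordinate solves a linear equation `z' = c z + d` with a
continuous coefficient `c` and a nonnegative source `d`. Along positive solutions the Lyapunov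
function `V` has derivative `-δ (γx - σ)² / (σx) ≤ 0`, so `V(x t, y t) ≤ V(x 0, y 0) ≤ C`.
Since `V(x, y) = (γx - σ log x) + (βy - a log y)` and the first summand is minimal at
`x = σ/γ`, this forces `βy - a log y ≤ βȳ - a log ȳ`, and `βy - a log y` increases on `[a/β, ∞)`.
-/

open Set

theorem pos_of_hasDerivAt_eq_mul_add_of_nonneg {z c d : ℝ → ℝ}
    (hz : ∀ t, 0 ≤ t → HasDerivAt z (c t * z t + d t) t) (hc : ContinuousOn c (Ici 0))
    (hd : ∀ t, 0 ≤ t → 0 ≤ d t) (h0 : 0 < z 0) : ∀ t, 0 ≤ t → 0 < z t := by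
  intro t₀ ht₀
  by_contra! hzt₀
  have hzc : ContinuousOn z (Icc 0 t₀) := fun s hs =>
    (hz s hs.1).continuousAt.continuousWithinAt
  set S := Icc 0 t₀ ∩ z ⁻¹' Iic 0
  have hSbdd : BddBelow S := ⟨0, fun s hs => hs.1.1⟩
  obtain ⟨⟨ht₁0, ht₁t₀⟩, hzt₁ : z (sInf S) ≤ 0⟩ : sInf S ∈ S :=
    (hzc.preimage_isClosed_of_isClosed isClosed_Icc isClosed_Iic).csInf_mem
      ⟨t₀, ⟨ht₀, le_rfl⟩, hzt₀⟩ hSbdd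
  set t₁ := sInf S
  have hpos : ∀ s ∈ Ioo 0 t₁, 0 < z s := fun s hs => by
    by_contra! hzs
    exact (csInf_le hSbdd ⟨⟨hs.1.le, hs.2.le.trans ht₁t₀⟩, hzs⟩).not_gt hs.2
  obtain ⟨K, hK⟩ := isCompact_Icc.exists_bound_of_continuousOn (hc.mono Icc_subset_Ici_self)
  -- Before its first zero `z ≥ 0`, so `z' ≥ -K z` and `z e^{Kt}` cannot decrease to `0`.
  have hmono : MonotoneOn (fun s => z s * Real.exp (K * s)) (Icc 0 t₁) := by
    refine monotoneOn_of_hasDerivWithinAt_nonneg (convex_Icc 0 t₁)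
      (f' := fun s => ((c s + K) * z s + d s) * Real.exp (K * s)) ?_ (fun s hs => ?_)
      (fun s hs => ?_)
    · exact (hzc.mono (Icc_subset_Icc_right ht₁t₀)).mul (by fun_prop)
    · rw [interior_Icc] at hs
      have := (hz s hs.1.le).mul ((hasDerivAt_id s).const_mul K).exp
      exact (this.congr_deriv (by simp only [id]; ring)).hasDerivWithinAt
    · rw [interior_Icc] at hs
      have hcK : 0 ≤ c s + K := by
        have := hK s ⟨hs.1.le, hs.2.le⟩
        rw [Real.norm_eq_abs, abs_le] at this
        linarith
      exact mul_nonneg (add_nonneg (mul_nonneg hcK (hpos s hs).le) (hd s hs.1.le))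
        (Real.exp_pos _).le
  have := hmono ⟨le_rfl, ht₁0⟩ ⟨ht₁0, le_rfl⟩ ht₁0
  simp only [mul_zero, Real.exp_zero, mul_one] at this
  nlinarith [Real.exp_pos (K * t₁)]

noncomputable def linSubLog (p q u : ℝ) : ℝ := p * u - q * Real.log u

section linSubLog

variable {p q : ℝ}

theorem linSubLog_le (hp : 0 < p) (hq : 0 < q) {u : ℝ} (hu : 0 < u) :
    linSubLog p q (q / p) ≤ linSubLog p q u := by
  have hlog := Real.log_le_sub_one_of_pos (show 0 < p * u / q by positivity)
  rw [Real.log_div (by positivity) hq.ne', Real.log_mul hp.ne' hu.ne'] at hlog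
  have hmul := mul_le_mul_of_nonneg_left hlog hq.le
  unfold linSubLog
  rw [Real.log_div hq.ne' hp.ne', mul_div_cancel₀ _ hp.ne']
  have : q * (p * u / q - 1) = p * u - q := by field_simp
  linarith

theorem strictMonoOn_linSubLog (hp : 0 < p) (hq : 0 < q) :
    StrictMonoOn (linSubLog p q) (Ici (q / p)) := by
  have hderiv : ∀ u, 0 < u → HasDerivAt (linSubLog p q) (p - q / u) u := fun u hu =>
    (((hasDerivAt_id' u).const_mul p).sub
      ((Real.hasDerivAt_log hu.ne').const_mul q)).congr_deriv (by ring)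
  have hqp : 0 < q / p := div_pos hq hp
  refine strictMonoOn_of_hasDerivWithinAt_pos (convex_Ici _) (fun u hu => ?_)
    (fun u hu => (hderiv u ?_).hasDerivWithinAt) (fun u hu => ?_)
  · exact (hderiv u (hqp.trans_le hu)).continuousAt.continuousWithinAt
  · rw [interior_Ici] at hu
    exact hqp.trans hu
  · rw [interior_Ici, mem_Ioi] at hu
    rw [sub_pos, div_lt_iff₀ (hqp.trans hu)]
    rwa [div_lt_iff₀ hp, mul_comm] at hu

end linSubLog

noncomputable def lyapunov (γ σ β a x y : ℝ) : ℝ :=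
  γ * x - σ * Real.log x + β * y - a * Real.log y

section lyapunov

variable {α β γ δ σ a : ℝ}

theorem lyapunov_eq_add (x y : ℝ) :
    lyapunov γ σ β a x y = linSubLog γ σ x + linSubLog β a y := by
  unfold lyapunov linSubLog
  ring

theorem hasDerivAt_lyapunov (hσ : σ ≠ 0) (ha : a = γ * δ / σ - α) {x y : ℝ → ℝ} {t : ℝ}
    (hx : HasDerivAt x (δ - α * x t - β * x t * y t) t)
    (hy : HasDerivAt y (γ * x t * y t - σ * y t) t) (hxt : 0 < x t) (hyt : 0 < y t) :
    HasDerivAt (fun s => lyapunov γ σ β a (x s) (y s))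
      (-(δ * (γ * x t - σ) ^ 2 / (σ * x t))) t := by
  have := (((hx.const_mul γ).sub ((hx.log hxt.ne').const_mul σ)).add
    (hy.const_mul β)).sub ((hy.log hyt.ne').const_mul a)
  refine this.congr_deriv ?_
  rw [ha]
  field_simp
  ring

theorem antitoneOn_lyapunov (hδ : 0 ≤ δ) (hσ : 0 < σ) (ha : a = γ * δ / σ - α)
    {x y : ℝ → ℝ} (hx : ∀ t, 0 ≤ t → HasDerivAt x (δ - α * x t - β * x t * y t) t)
    (hy : ∀ t, 0 ≤ t → HasDerivAt y (γ * x t * y t - σ * y t) t)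
    (hxpos : ∀ t, 0 ≤ t → 0 < x t) (hypos : ∀ t, 0 ≤ t → 0 < y t) :
    AntitoneOn (fun t => lyapunov γ σ β a (x t) (y t)) (Ici 0) := by
  have hderiv t (ht : 0 ≤ t) :=
    hasDerivAt_lyapunov hσ.ne' ha (hx t ht) (hy t ht) (hxpos t ht) (hypos t ht)
  refine antitoneOn_of_hasDerivWithinAt_nonpos (convex_Ici 0)
    (fun t ht => (hderiv t ht).continuousAt.continuousWithinAt)
    (fun t ht => (hderiv t (interior_subset ht)).hasDerivWithinAt) (fun t ht => ?_)
  have : 0 ≤ δ * (γ * x t - σ) ^ 2 / (σ * x t) :=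
    div_nonneg (by positivity) (mul_pos hσ (hxpos t (interior_subset ht))).le
  linarith

theorem le_of_lyapunov_le (hβ : 0 < β) (hγ : 0 < γ) (hσ : 0 < σ) (ha : 0 < a) {x y ybar : ℝ}
    (hx : 0 < x) (hybar : a / β < ybar)
    (h : lyapunov γ σ β a x y ≤ lyapunov γ σ β a (σ / γ) ybar) :
    y ≤ ybar := by
  rw [lyapunov_eq_add, lyapunov_eq_add] at h
  have hmin := linSubLog_le hγ hσ hx
  by_contra! hlt
  have := strictMonoOn_linSubLog hβ ha hybar.le (hybar.trans hlt).le hlt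
  linarith

end lyapunov

theorem damped_pp_peak_estimate_general
    (α β γ δ σ a C ybar : ℝ)
    (hβ : 0 < β) (hγ : 0 < γ) (hδ : 0 < δ) (hσ : 0 < σ)
    (hR : γ * δ > α * σ) (hadef : a = γ * δ / σ - α)
    (hybar_pos : a / β < ybar)
    (hybar_eq : γ * (σ / γ) - σ * Real.log (σ / γ) + β * ybar - a * Real.log ybar = C)
    (x y : ℝ → ℝ)
    (hx : ∀ t, 0 ≤ t → HasDerivAt x (δ - α * x t - β * x t * y t) t)
    (hy : ∀ t, 0 ≤ t → HasDerivAt y (γ * x t * y t - σ * y t) t)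
    (hx0 : 0 < x 0) (hy0 : 0 < y 0)
    (hV0 : γ * x 0 - σ * Real.log (x 0) + β * y 0 - a * Real.log (y 0) ≤ C) :
    ∀ t, 0 ≤ t → y t ≤ ybar := by
  have ha : 0 < a := by
    rw [hadef, sub_pos, lt_div_iff₀ hσ]
    linarith
  have hypos := pos_of_hasDerivAt_eq_mul_add_of_nonneg (c := fun t => γ * x t - σ)
    (d := 0) (fun t ht => (hy t ht).congr_deriv (by simp only [Pi.zero_apply]; ring))
    (fun t ht => ((hx t ht).continuousAt.continuousWithinAt.const_mul γ).sub
      continuousWithinAt_const)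
    (fun _ _ => le_rfl) hy0
  have hxpos := pos_of_hasDerivAt_eq_mul_add_of_nonneg (c := fun t => -α - β * y t)
    (d := fun _ => δ) (fun t ht => (hx t ht).congr_deriv (by ring))
    (fun t ht => continuousWithinAt_const.sub
      ((hy t ht).continuousAt.continuousWithinAt.const_mul β))
    (fun _ _ => hδ.le) hx0
  have hanti := antitoneOn_lyapunov hδ.le hσ hadef hx hy hxpos hypos
  intro t ht
  exact le_of_lyapunov_le hβ hγ hσ ha (hxpos t ht) hybar_pos
    ((hanti self_mem_Ici ht ht).trans (hV0.trans hybar_eq.ge))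

/-- Peak estimate: with `a = γδ/σ − α > 0`, `C = V(δ/α, a/β)` and `ȳ` the unique
solution `y > a/β` of `V(σ/γ, y) = C` (where `V(x,y) = γx − σ log x + βy − a log y`),
every positive solution of the damped predator–prey system starting in the trapping
oval `{V ≤ C}` satisfies `y(t) ≤ ȳ` for all `t ≥ 0`. -/
theorem damped_pp_peak_estimate
    (α β γ δ σ a C ybar : ℝ)
    (hα : 0 < α) (hβ : 0 < β) (hγ : 0 < γ) (hδ : 0 < δ) (hσ : 0 < σ)
    (hR : γ * δ > α * σ) (hadef : a = γ * δ / σ - α)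
    (hCdef : C = γ * (δ / α) - σ * Real.log (δ / α) + β * (a / β) - a * Real.log (a / β))
    (hybar_pos : a / β < ybar)
    (hybar_eq : γ * (σ / γ) - σ * Real.log (σ / γ) + β * ybar - a * Real.log ybar = C)
    (hybar_unique : ∀ y : ℝ, a / β < y →
      γ * (σ / γ) - σ * Real.log (σ / γ) + β * y - a * Real.log y = C → y = ybar)
    (x y : ℝ → ℝ)
    (hx : ∀ t, 0 ≤ t → HasDerivAt x (δ - α * x t - β * x t * y t) t)
    (hy : ∀ t, 0 ≤ t → HasDerivAt y (γ * x t * y t - σ * y t) t)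
    (hx0 : 0 < x 0) (hy0 : 0 < y 0)
    (hV0 : γ * x 0 - σ * Real.log (x 0) + β * y 0 - a * Real.log (y 0) ≤ C) :
    ∀ t, 0 ≤ t → y t ≤ ybar :=
  damped_pp_peak_estimate_general α β γ δ σ a C ybar hβ hγ hδ hσ hR hadef hybar_pos hybar_eq x y hx
    hy hx0 hy0 hV0
end

section
/- Let f : ℝ → ℝ be continuous with f(y) ≥ 0 for all y, let γ, σ, v > 0, and let m ∈ ℝ satisfy m + (v/σ)(1 − log(v/σ)) ≥ 0. Define V_m(x,y,z) := γx − σ·log x + γz·y − γz·(v/σ)·log y + mγz for x, y > 0. Then along any differentiable solution (x, y, z) : [0,∞) → ℝ³ of ẋ = vz − γzxy, ẏ = γxy − σy, ż = −f(y)z² with x(t), y(t), z(t) > 0 for all t ≥ 0, one has d/dt [V_m(x(t), y(t), z(t))] = −(γ²vz/(σx))·(x − σ/γ)² − γ·f(y)·(y − (v/σ)·log y + m)·z² ≤ 0; i.e., V_m is a Lyapunov function for the system on the open first octant. -/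
/-!
Differentiating `V_m` along the flow and completing the square in `x` gives the stated formula
(an algebraic identity once `ẋ, ẏ, ż` are substituted). Its first term is clearly nonpositive;
for the second, `log u ≤ u - 1` at `u = y / (v/σ)` gives `y - (v/σ) log y ≥ (v/σ)(1 - log (v/σ))`,
so the hypothesis on `m` makes the factor `y - (v/σ) log y + m` nonnegative.
-/

open Real

lemma mul_one_sub_log_le_sub_mul_log {c y : ℝ} (hc : 0 < c) (hy : 0 < y) :
    c * (1 - log c) ≤ y - c * log y := by
  have h := mul_le_mul_of_nonneg_left (log_le_sub_one_of_pos (div_pos hy hc)) hc.le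
  rw [log_div hy.ne' hc.ne', mul_sub, mul_sub, mul_div_cancel₀ y hc.ne', mul_one] at h
  linarith

noncomputable def plantLyapunov (γ σ v m x y z : ℝ) : ℝ :=
  γ * x - σ * log x + γ * z * y - γ * z * (v / σ) * log y + m * γ * z

lemma hasDerivAt_plantLyapunov {x y z : ℝ → ℝ} {x' y' z' t : ℝ} (γ σ v m : ℝ)
    (hx : HasDerivAt x x' t) (hy : HasDerivAt y y' t) (hz : HasDerivAt z z' t)
    (hx0 : x t ≠ 0) (hy0 : y t ≠ 0) :
    HasDerivAt (fun s => plantLyapunov γ σ v m (x s) (y s) (z s))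
      (γ * x' - σ * (x' / x t) + (γ * z' * y t + γ * z t * y')
        - (γ * z' * (v / σ) * log (y t) + γ * z t * (v / σ) * (y' / y t)) + m * γ * z') t :=
  ((((hx.const_mul γ).sub ((hx.log hx0).const_mul σ)).add ((hz.const_mul γ).mul hy)).sub
    (((hz.const_mul γ).mul_const (v / σ)).mul (hy.log hy0))).add (hz.const_mul (m * γ))

lemma plantLyapunov_orbital_derivative_eq {γ σ v m x y z : ℝ} (F : ℝ) (hγ : γ ≠ 0) (hσ : σ ≠ 0)
    (hx : x ≠ 0) (hy : y ≠ 0) :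
    γ * (v * z - γ * z * x * y) - σ * ((v * z - γ * z * x * y) / x)
        + (γ * (-F * z ^ 2) * y + γ * z * (γ * x * y - σ * y))
        - (γ * (-F * z ^ 2) * (v / σ) * log y + γ * z * (v / σ) * ((γ * x * y - σ * y) / y))
        + m * γ * (-F * z ^ 2) =
      -(γ ^ 2 * v * z / (σ * x)) * (x - σ / γ) ^ 2 - γ * F * (y - v / σ * log y + m) * z ^ 2 := by
  field_simp
  ring

lemma plantLyapunov_orbital_derivative_nonpos {γ σ v m x y z F : ℝ} (hγ : 0 < γ) (hσ : 0 < σ)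
    (hv : 0 < v) (hm : 0 ≤ m + v / σ * (1 - log (v / σ))) (hx : 0 < x) (hy : 0 < y) (hz : 0 ≤ z)
    (hF : 0 ≤ F) :
    -(γ ^ 2 * v * z / (σ * x)) * (x - σ / γ) ^ 2 - γ * F * (y - v / σ * log y + m) * z ^ 2 ≤ 0 := by
  have hfactor : 0 ≤ y - v / σ * log y + m := by
    linarith [mul_one_sub_log_le_sub_mul_log (div_pos hv hσ) hy]
  have hsq : 0 ≤ γ ^ 2 * v * z / (σ * x) * (x - σ / γ) ^ 2 := by positivity
  have hdiss : 0 ≤ γ * F * (y - v / σ * log y + m) * z ^ 2 := by positivity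
  linarith

theorem plant_growth_lyapunov_derivative_general
    (γ σ v m : ℝ) (hγ : 0 < γ) (hσ : 0 < σ) (hv : 0 < v)
    (hm : 0 ≤ m + v / σ * (1 - Real.log (v / σ)))
    (f : ℝ → ℝ) (hfnn : ∀ y, 0 ≤ f y)
    (x y z : ℝ → ℝ)
    (hx : ∀ t, 0 ≤ t → HasDerivAt x (v * z t - γ * z t * x t * y t) t)
    (hy : ∀ t, 0 ≤ t → HasDerivAt y (γ * x t * y t - σ * y t) t)
    (hz : ∀ t, 0 ≤ t → HasDerivAt z (-f (y t) * (z t) ^ 2) t)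
    (hxpos : ∀ t, 0 ≤ t → 0 < x t) (hypos : ∀ t, 0 ≤ t → 0 < y t)
    (hzpos : ∀ t, 0 ≤ t → 0 < z t) :
    ∀ t, 0 ≤ t →
      HasDerivAt
        (fun s => γ * x s - σ * Real.log (x s) + γ * z s * y s -
          γ * z s * (v / σ) * Real.log (y s) + m * γ * z s)
        (-(γ ^ 2 * v * z t / (σ * x t)) * (x t - σ / γ) ^ 2 -
          γ * f (y t) * (y t - v / σ * Real.log (y t) + m) * (z t) ^ 2) t ∧
      -(γ ^ 2 * v * z t / (σ * x t)) * (x t - σ / γ) ^ 2 -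
          γ * f (y t) * (y t - v / σ * Real.log (y t) + m) * (z t) ^ 2 ≤ 0 := by
  intro t ht
  refine ⟨?_, plantLyapunov_orbital_derivative_nonpos hγ hσ hv hm (hxpos t ht) (hypos t ht)
    (hzpos t ht).le (hfnn (y t))⟩
  rw [← plantLyapunov_orbital_derivative_eq (f (y t)) hγ.ne' hσ.ne' (hxpos t ht).ne'
    (hypos t ht).ne']
  exact hasDerivAt_plantLyapunov γ σ v m (hx t ht) (hy t ht) (hz t ht) (hxpos t ht).ne' (hypos t ht).ne'

/-- Lyapunov function for the z-form of the plant growth model: with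
`V_m(x,y,z) = γx − σ log x + γz y − γz (v/σ) log y + mγz` and
`m + (v/σ)(1 − log(v/σ)) ≥ 0`, along any positive solution of
`ẋ = vz − γzxy`, `ẏ = γxy − σy`, `ż = −f(y)z²` one has
`d/dt V_m = −(γ²vz/(σx))(x − σ/γ)² − γ f(y)(y − (v/σ) log y + m) z² ≤ 0`. -/
theorem plant_growth_lyapunov_derivative
    (γ σ v m : ℝ) (hγ : 0 < γ) (hσ : 0 < σ) (hv : 0 < v)
    (hm : 0 ≤ m + v / σ * (1 - Real.log (v / σ)))
    (f : ℝ → ℝ) (hf : Continuous f) (hfnn : ∀ y, 0 ≤ f y)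
    (x y z : ℝ → ℝ)
    (hx : ∀ t, 0 ≤ t → HasDerivAt x (v * z t - γ * z t * x t * y t) t)
    (hy : ∀ t, 0 ≤ t → HasDerivAt y (γ * x t * y t - σ * y t) t)
    (hz : ∀ t, 0 ≤ t → HasDerivAt z (-f (y t) * (z t) ^ 2) t)
    (hxpos : ∀ t, 0 ≤ t → 0 < x t) (hypos : ∀ t, 0 ≤ t → 0 < y t)
    (hzpos : ∀ t, 0 ≤ t → 0 < z t) :
    ∀ t, 0 ≤ t →
      HasDerivAt
        (fun s => γ * x s - σ * Real.log (x s) + γ * z s * y s -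
          γ * z s * (v / σ) * Real.log (y s) + m * γ * z s)
        (-(γ ^ 2 * v * z t / (σ * x t)) * (x t - σ / γ) ^ 2 -
          γ * f (y t) * (y t - v / σ * Real.log (y t) + m) * (z t) ^ 2) t ∧
      -(γ ^ 2 * v * z t / (σ * x t)) * (x t - σ / γ) ^ 2 -
          γ * f (y t) * (y t - v / σ * Real.log (y t) + m) * (z t) ^ 2 ≤ 0 :=
  plant_growth_lyapunov_derivative_general γ σ v m hγ hσ hv hm f hfnn x y z hx hy hz hxpos hypos
    hzpos
end

section
/- Let U ⊆ ℝ² be a region (open set), let X : U → ℝ² be a continuously differentiable vector field, and let V : U → ℝ be continuously differentiable with ∇V(p) · X(p) ≤ 0 for all p ∈ U. Let p : [0,∞) → ℝ² be a solution of ṗ = X(p) with p(t) ∈ U for all t ≥ 0. Then every ω-limit point q of p that lies in U satisfies ∇V(q) · X(q) = 0; i.e., ω(p(0)) ∩ U ⊆ {q ∈ U : ∇V(q) · X(q) = 0}, where ω(p(0)) = {q ∈ ℝ² : p(t_k) → q for some sequence t_k → ∞}. -/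
/-!
If `∇V · X` were negative at an ω-limit point `q`, it would stay below a negative constant on a
ball around `q`, on which `X` is also bounded; every visit of the trajectory near `q` then keeps
it in the ball for a fixed time and lowers `V` by a fixed amount. But `V ∘ p` is nonincreasing
and converges to `V q` along the visits, so it never drops below `V q`: a contradiction.
-/

open Filter Metric Set Topology

lemma le_of_tendsto_of_hasDerivAt_nonpos {f f' : ℝ → ℝ} {a L : ℝ}
    (hf : ∀ t, a ≤ t → HasDerivAt f (f' t) t) (hf' : ∀ t, a ≤ t → f' t ≤ 0)
    {ι : Type*} {l : Filter ι} [l.NeBot] {s : ι → ℝ} (hs : Tendsto s l atTop)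
    (hL : Tendsto (f ∘ s) l (𝓝 L)) {t : ℝ} (ht : a ≤ t) : L ≤ f t := by
  have hanti : AntitoneOn f (Ici a) :=
    antitoneOn_of_hasDerivWithinAt_nonpos (convex_Ici a)
      (fun t ht => (hf t ht).continuousAt.continuousWithinAt)
      (fun t ht => (hf t (interior_subset ht)).hasDerivWithinAt)
      (fun t ht => hf' t (interior_subset ht))
  exact le_of_tendsto hL <| (hs.eventually_ge_atTop t).mono fun k hk => hanti ht (ht.trans hk) hk

section Trajectory

variable {E : Type*} [NormedAddCommGroup E] [NormedSpace ℝ E]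

lemma mapsTo_closedBall_of_hasDerivAt {X : E → E} {p : ℝ → E} {q : E} {ρ r M t₀ δ : ℝ}
    (hp : ∀ t ∈ Icc t₀ (t₀ + δ), HasDerivAt p (X (p t)) t)
    (hX : ∀ x ∈ closedBall q r, ‖X x‖ < M) (hM : 0 ≤ M)
    (hstart : dist (p t₀) q ≤ ρ) (hρ : ρ + M * δ ≤ r) :
    MapsTo p (Icc t₀ (t₀ + δ)) (closedBall q r) := by
  have hB (t : ℝ) : HasDerivAt (fun t => ρ + M * (t - t₀)) M t := by
    simpa using ((hasDerivAt_id t).sub_const t₀).const_mul M |>.const_add ρ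
  -- Fencing: `‖p t - q‖` cannot cross the barrier `ρ + M (t - t₀)`, which stays inside the ball.
  have hfence : ∀ t ∈ Icc t₀ (t₀ + δ), ‖p t - q‖ ≤ ρ + M * (t - t₀) :=
    image_norm_le_of_norm_deriv_right_lt_deriv_boundary (f := fun t => p t - q)
      (fun t ht => (hp t ht).continuousAt.continuousWithinAt.sub continuousWithinAt_const)
      (fun t ht => ((hp t (Ico_subset_Icc_self ht)).sub_const q).hasDerivWithinAt)
      (by simpa [dist_eq_norm] using hstart) hB
      (fun t ht heq => hX _ <| by
        rw [mem_closedBall, dist_eq_norm, heq]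
        nlinarith [ht.1, ht.2])
  intro t ht
  rw [mem_closedBall, dist_eq_norm]
  nlinarith [hfence t ht, ht.2]

lemma exists_forall_le_sub_of_fderiv_apply_neg {X : E → E} {V : E → ℝ} {q : E}
    (hX : ContinuousAt X q) (hV : ∀ᶠ x in 𝓝 q, DifferentiableAt ℝ V x)
    (hVX : ContinuousAt (fun x => fderiv ℝ V x (X x)) q) (hneg : fderiv ℝ V q (X q) < 0) :
    ∃ ρ > 0, ∃ δ > 0, ∃ η > 0, ∀ (p : ℝ → E) (t₀ : ℝ),
      (∀ t ∈ Icc t₀ (t₀ + δ), HasDerivAt p (X (p t)) t) → dist (p t₀) q ≤ ρ →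
        V (p (t₀ + δ)) ≤ V (p t₀) - η := by
  set c := fderiv ℝ V q (X q)
  set M := ‖X q‖ + 1
  have hM : 0 < M := by positivity
  have hev : ∀ᶠ x in 𝓝 q,
      DifferentiableAt ℝ V x ∧ fderiv ℝ V x (X x) < c / 2 ∧ ‖X x‖ < M :=
    hV.and <| (hVX.eventually (gt_mem_nhds (by linarith))).and
      (hX.norm.eventually (gt_mem_nhds (by linarith)))
  obtain ⟨r, hr, hball⟩ := nhds_basis_closedBall.eventually_iff.mp hev
  set δ := r / (2 * M)
  have hδ : 0 < δ := by positivity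
  have hMδ : M * δ = r / 2 := by simp only [δ]; field_simp
  refine ⟨r / 2, by positivity, δ, hδ, -(c / 2) * δ, mul_pos (by linarith) hδ,
    fun p t₀ hp hstart => ?_⟩
  have hmaps := mapsTo_closedBall_of_hasDerivAt hp (fun x hx => (hball hx).2.2) hM.le hstart
    (by linarith)
  have hVp : ∀ t ∈ Icc t₀ (t₀ + δ),
      HasDerivAt (fun s => V (p s)) (fderiv ℝ V (p t) (X (p t))) t :=
    fun t ht => (hball (hmaps ht)).1.hasFDerivAt.comp_hasDerivAt t (hp t ht)
  have hdec := (convex_Icc t₀ (t₀ + δ)).image_sub_le_mul_sub_of_deriv_le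
    (fun t ht => (hVp t ht).continuousAt.continuousWithinAt)
    (fun t ht => (hVp t (interior_subset ht)).differentiableAt.differentiableWithinAt)
    (fun t ht => by
      rw [(hVp t (interior_subset ht)).deriv]
      exact (hball (hmaps (interior_subset ht))).2.1.le)
    t₀ (left_mem_Icc.2 (by linarith)) (t₀ + δ) (right_mem_Icc.2 (by linarith)) (by linarith)
  linarith

end Trajectory

/-- Lyapunov's theorem (omega-limit version): if `V` is `C¹` on an open region `U` with
`∇V · X ≤ 0` on `U`, and `p(t)` is a solution of `ṗ = X(p)` staying in `U` for all
`t ≥ 0`, then every ω-limit point `q` of the trajectory lying in `U` satisfies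
`∇V(q) · X(q) = 0`. -/
theorem lyapunov_omega_limit
    (U : Set (ℝ × ℝ)) (hU : IsOpen U)
    (X : ℝ × ℝ → ℝ × ℝ) (hX : ContDiffOn ℝ 1 X U)
    (V : ℝ × ℝ → ℝ) (hV : ContDiffOn ℝ 1 V U)
    (hdiss : ∀ p ∈ U, fderiv ℝ V p (X p) ≤ 0)
    (p : ℝ → ℝ × ℝ)
    (hp : ∀ t, 0 ≤ t → HasDerivAt p (X (p t)) t)
    (hpU : ∀ t, 0 ≤ t → p t ∈ U) :
    ∀ q ∈ U,
      (∃ tk : ℕ → ℝ, Tendsto tk atTop atTop ∧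
          Tendsto (fun k => p (tk k)) atTop (nhds q)) →
      fderiv ℝ V q (X q) = 0 := by
  rintro q hq ⟨tk, htk, hpq⟩
  have hVdiff : ∀ x ∈ U, DifferentiableAt ℝ V x := fun x hx =>
    (hV.differentiableOn one_ne_zero).differentiableAt (hU.mem_nhds hx)
  have hVp : ∀ t, 0 ≤ t → HasDerivAt (fun s => V (p s)) (fderiv ℝ V (p t) (X (p t))) t :=
    fun t ht => (hVdiff _ (hpU t ht)).hasFDerivAt.comp_hasDerivAt t (hp t ht)
  have hVlim : Tendsto (fun k => V (p (tk k))) atTop (𝓝 (V q)) :=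
    ((hV.continuousOn q hq).continuousAt (hU.mem_nhds hq)).tendsto.comp hpq
  refine le_antisymm (hdiss q hq) (not_lt.1 fun hneg => ?_)
  obtain ⟨ρ, hρ, δ, hδ, η, hη, hdec⟩ := exists_forall_le_sub_of_fderiv_apply_neg
    ((hX.continuousOn q hq).continuousAt (hU.mem_nhds hq))
    (eventually_of_mem (hU.mem_nhds hq) hVdiff)
    (((hV.continuousOn_fderiv_of_isOpen hU le_rfl).clm_apply hX.continuousOn q hq).continuousAt
      (hU.mem_nhds hq))
    hneg
  obtain ⟨k, hk₀, hkρ, hkV⟩ := ((htk.eventually_ge_atTop 0).and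
    ((hpq.eventually (closedBall_mem_nhds q hρ)).and
      (hVlim.eventually (gt_mem_nhds (lt_add_of_pos_right _ hη))))).exists
  have hdrop := hdec p (tk k) (fun t ht => hp t (hk₀.trans ht.1)) hkρ
  have hlow := le_of_tendsto_of_hasDerivAt_nonpos hVp (fun t ht => hdiss _ (hpU t ht)) htk
    hVlim (t := tk k + δ) (by linarith)
  linarith
end
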